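/- arXiv:2403.06127 — 5 statements merged into one kernel-verified Lean document; each statement's English description precedes it below -/
import Mathlib

section
/- If a semimetric space X is sequentially f-compact (every sequence (x_i) with d(x_i,x_j) < ∞ for all i < j has a subsequence converging with respect to the backward topology), then X is f-complete (every forward Cauchy sequence b-converges to a point of X). -/
open Set Filter
open scoped ENNReal NNReal

structure SMetric (X : Type*) where
  d : X → X → ℝ≥0∞
  d_self : ∀ x, d x x = 0
  d_eq_zero : ∀ x y, d x y = 0 → x = y
  d_triangle : ∀ x y z, d x z ≤ d x y + d y z

namespace SMetric

variable {X : Type*}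

def fTop (M : SMetric X) : TopologicalSpace X :=
  TopologicalSpace.generateFrom {U | ∃ (x : X) (r : ℝ≥0∞), U = {y | M.d x y < r}}

def bTop (M : SMetric X) : TopologicalSpace X :=
  TopologicalSpace.generateFrom {U | ∃ (x : X) (r : ℝ≥0∞), U = {y | M.d y x < r}}

/-- The sequence `u` b-converges to `x`: convergence w.r.t. the backward topology,
equivalently `d (u i) x → 0`. -/
def BConv (M : SMetric X) (u : ℕ → X) (x : X) : Prop :=
  ∀ ε : ℝ≥0∞, 0 < ε → ∀ᶠ k in Filter.atTop, M.d (u k) x < ε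

/-- The sequence `u` f-converges to `x`: convergence w.r.t. the forward topology,
equivalently `d x (u i) → 0`. -/
def FConv (M : SMetric X) (u : ℕ → X) (x : X) : Prop :=
  ∀ ε : ℝ≥0∞, 0 < ε → ∀ᶠ k in Filter.atTop, M.d x (u k) < ε

def FCauchy (M : SMetric X) (u : ℕ → X) : Prop :=
  ∀ ε : ℝ≥0∞, 0 < ε → ∃ N : ℕ, ∀ m n : ℕ, N ≤ n → n ≤ m → M.d (u n) (u m) < ε

def BCauchy (M : SMetric X) (u : ℕ → X) : Prop :=
  ∀ ε : ℝ≥0∞, 0 < ε → ∃ N : ℕ, ∀ m n : ℕ, N ≤ n → n ≤ m → M.d (u m) (u n) < ε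

def SeqFCompact (M : SMetric X) : Prop :=
  ∀ u : ℕ → X, (∀ i j : ℕ, i < j → M.d (u i) (u j) < ⊤) →
    ∃ φ : ℕ → ℕ, StrictMono φ ∧ ∃ x : X, M.BConv (u ∘ φ) x

def SeqBCompact (M : SMetric X) : Prop :=
  ∀ u : ℕ → X, (∀ i j : ℕ, i < j → M.d (u j) (u i) < ⊤) →
    ∃ φ : ℕ → ℕ, StrictMono φ ∧ ∃ x : X, M.FConv (u ∘ φ) x

def FComplete (M : SMetric X) : Prop :=
  ∀ u : ℕ → X, M.FCauchy u → ∃ x : X, M.BConv u x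

def BComplete (M : SMetric X) : Prop :=
  ∀ u : ℕ → X, M.BCauchy u → ∃ x : X, M.FConv u x

end SMetric

namespace SMetric

variable {X : Type*} {M : SMetric X} {u : ℕ → X}

theorem FCauchy.exists_tail_d_lt_top (hu : M.FCauchy u) :
    ∃ N, ∀ i j : ℕ, i < j → M.d (u (N + i)) (u (N + j)) < ⊤ := by
  obtain ⟨N, hN⟩ := hu 1 one_pos
  exact ⟨N, fun i j hij => (hN _ _ (Nat.le_add_right N i) (by omega)).trans ENNReal.one_lt_top⟩

theorem FCauchy.bConv_of_bConv_comp (hu : M.FCauchy u) {ψ : ℕ → ℕ}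
    (hψ : Tendsto ψ atTop atTop) {x : X} (hx : M.BConv (u ∘ ψ) x) : M.BConv u x := by
  intro ε hε
  have hε2 : 0 < ε / 2 := ENNReal.half_pos hε.ne'
  obtain ⟨N, hN⟩ := hu (ε / 2) hε2
  rw [eventually_atTop]
  refine ⟨N, fun k hk => ?_⟩
  obtain ⟨m, hm_far, hm_close⟩ := ((hψ.eventually_ge_atTop k).and (hx (ε / 2) hε2)).exists
  calc M.d (u k) x ≤ M.d (u k) (u (ψ m)) + M.d (u (ψ m)) x := M.d_triangle _ _ _
    _ < ε / 2 + ε / 2 := ENNReal.add_lt_add (hN _ _ hk hm_far) hm_close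
    _ = ε := ENNReal.add_halves ε

end SMetric

/-- If a semimetric space is sequentially f-compact, then it is f-complete. -/
theorem stmt_0 {X : Type*} (M : SMetric X) (h : M.SeqFCompact) : M.FComplete := by
  intro u hu
  obtain ⟨N, hN⟩ := hu.exists_tail_d_lt_top
  obtain ⟨φ, hφ, x, hx⟩ := h (fun i => u (N + i)) hN
  have hψ : Tendsto (fun i => N + φ i) atTop atTop :=
    tendsto_atTop_mono (fun i => Nat.le_add_left _ N) hφ.tendsto_atTop
  exact ⟨x, hu.bConv_of_bConv_comp hψ hx⟩
end

section
/- In a locally finite digraph, for a ray or anti-ray R₁ and a ray or anti-ray R₂: there exist infinitely many pairwise disjoint directed R₁-R₂ paths if and only if for every vertex x and every r ∈ ℕ there is a directed R₁-R₂ path avoiding B⁺_r(x) ∪ B⁻_r(x). -/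
open Set
open scoped ENNReal NNReal

section Digraph

variable {V : Type*}

def IsWalk (E : V → V → Prop) (n : ℕ) (p : Fin (n+1) → V) : Prop :=
  ∀ i : Fin n, E (p i.castSucc) (p i.succ)

noncomputable def ddist (E : V → V → Prop) (x y : V) : ℝ≥0∞ :=
  sInf {m : ℝ≥0∞ | ∃ (n : ℕ) (p : Fin (n+1) → V),
    IsWalk E n p ∧ p 0 = x ∧ p (Fin.last n) = y ∧ m = n}

def outBallD (E : V → V → Prop) (x : V) (r : ℝ≥0∞) : Set V := {y | ddist E x y ≤ r}
def inBallD (E : V → V → Prop) (x : V) (r : ℝ≥0∞) : Set V := {y | ddist E y x ≤ r}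

def IsRayD (E : V → V → Prop) (r : ℕ → V) : Prop :=
  Function.Injective r ∧ ∀ i, E (r i) (r (i+1))

def IsAntiRayD (E : V → V → Prop) (r : ℕ → V) : Prop :=
  Function.Injective r ∧ ∀ i, E (r (i+1)) (r i)

/-- `S` is the vertex set of some directed path starting in `A` and ending in `B`. -/
def IsPathFromTo (E : V → V → Prop) (A B : Set V) (S : Set V) : Prop :=
  ∃ (n : ℕ) (p : Fin (n+1) → V), IsWalk E n p ∧
    p 0 ∈ A ∧ p (Fin.last n) ∈ B ∧ S = Set.range p

/-- There exist infinitely many pairwise disjoint directed `A`-`B` paths. -/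
def InfDisjPaths (E : V → V → Prop) (A B : Set V) : Prop :=
  ∃ F : ℕ → Set V, (∀ k, IsPathFromTo E A B (F k)) ∧
    ∀ k l, k ≠ l → Disjoint (F k) (F l)

end Digraph

open Function

/-!
Pairwise disjoint paths can meet a finite set only finitely often, and balls of finite radius
are finite in a locally finite digraph; this gives one direction. Conversely, paths can be
chosen greedily: every vertex of the `r₁`-`r₂` paths chosen so far is reachable from a vertex
of `r₁`, and any two vertices of a ray or anti-ray are reachable from a common vertex of it,
so the finitely many paths chosen so far lie in one out-ball `B⁺_ρ(r₁ c)`, and a path avoiding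
that ball is disjoint from all of them.
-/

theorem exists_pairwise_disjoint_of_forall_exists_disjoint {α : Type*} {P Q : Set α → Prop}
    (h₀ : P ∅) (hstep : ∀ T, P T → ∃ S, Q S ∧ Disjoint S T ∧ P (T ∪ S)) :
    ∃ F : ℕ → Set α, (∀ k, Q (F k)) ∧ Pairwise (Disjoint on F) := by
  choose! S hQ hdisj hP using hstep
  let T : ℕ → Set α := fun n => Nat.rec ∅ (fun _ T => T ∪ S T) n
  have hT : ∀ n, P (T n) := fun n => by
    induction n with
    | zero => exact h₀
    | succ n ih => exact hP _ ih
  have hmono : Monotone T := monotone_nat_of_le_succ fun _ => subset_union_left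
  refine ⟨fun n => S (T n), fun n => hQ _ (hT n), (pairwise_disjoint_on _).mpr fun m n hmn => ?_⟩
  exact (hdisj _ (hT n)).symm.mono_left (subset_union_right.trans (hmono hmn))

theorem Set.Finite.exists_disjoint_of_pairwise_disjoint {α : Type*} {K : Set α} (hK : K.Finite)
    {F : ℕ → Set α} (hF : Pairwise (Disjoint on F)) : ∃ k, Disjoint (F k) K := by
  by_contra! hmeet
  choose g hg using fun k => not_disjoint_iff_nonempty_inter.mp (hmeet k)
  have := hK.to_subtype
  obtain ⟨k, l, hkl, hg_eq⟩ :=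
    Finite.exists_ne_map_eq_of_infinite fun k => (⟨g k, (hg k).2⟩ : K)
  have hgkl : g k = g l := congrArg Subtype.val hg_eq
  exact disjoint_left.mp (hF hkl) (hg k).1 (hgkl ▸ (hg l).1)

section Reachability

variable {V : Type*} {E : V → V → Prop}

def ReachIn (E : V → V → Prop) : ℕ → V → V → Prop
  | 0 => Eq
  | n + 1 => fun x z => ∃ y, ReachIn E n x y ∧ E y z

theorem ReachIn.add {m k : ℕ} {x y z : V} (hxy : ReachIn E m x y) (hyz : ReachIn E k y z) :
    ReachIn E (m + k) x z := by
  induction k generalizing z with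
  | zero => exact hyz ▸ hxy
  | succ k ih =>
    obtain ⟨w, hyw, hwz⟩ := hyz
    exact ⟨w, ih hyw, hwz⟩

theorem ReachIn.cons {n : ℕ} {x y z : V} (hxy : E x y) (hyz : ReachIn E n y z) :
    ReachIn E (n + 1) x z :=
  add_comm 1 n ▸ ReachIn.add ⟨x, rfl, hxy⟩ hyz

theorem ReachIn.flip {n : ℕ} {x y : V} (h : ReachIn E n x y) : ReachIn (flip E) n y x := by
  induction n generalizing y with
  | zero => exact h.symm
  | succ n ih =>
    obtain ⟨w, hxw, hwy⟩ := h
    exact ReachIn.cons hwy (ih hxw)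

theorem IsWalk.reachIn {n : ℕ} {p : Fin (n + 1) → V} (hp : IsWalk E n p) (j : Fin (n + 1)) :
    ReachIn E j (p 0) (p j) := by
  induction j using Fin.induction with
  | zero => rfl
  | succ i ih => exact ⟨p i.castSucc, ih, hp i⟩

theorem ReachIn.exists_isWalk : ∀ {n : ℕ} {x y : V}, ReachIn E n x y →
    ∃ p : Fin (n + 1) → V, IsWalk E n p ∧ p 0 = x ∧ p (Fin.last n) = y
  | 0, x, _, rfl => ⟨fun _ => x, fun i => i.elim0, rfl, rfl⟩
  | n + 1, _, z, ⟨_, hxy, hyz⟩ => by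
    obtain ⟨p, hp, rfl, rfl⟩ := hxy.exists_isWalk
    refine ⟨Fin.snoc p z, fun i => ?_, by simp, by simp⟩
    induction i using Fin.lastCases with
    | last => simpa using hyz
    | cast j =>
      rw [Fin.succ_castSucc, Fin.snoc_castSucc, Fin.snoc_castSucc]
      exact hp j

theorem ddist_le_iff {x y : V} {n : ℕ} : ddist E x y ≤ n ↔ ∃ m ≤ n, ReachIn E m x y := by
  constructor
  · intro h
    by_contra! hfar
    have hlow : (n + 1 : ℝ≥0∞) ≤ ddist E x y := by
      refine le_sInf ?_
      rintro _ ⟨m, p, hp, rfl, rfl, rfl⟩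
      have hnm : n < m := lt_of_not_ge fun hm => hfar m hm (hp.reachIn (Fin.last m))
      exact_mod_cast hnm
    exact (hlow.trans h).not_gt (ENNReal.lt_add_right (ENNReal.natCast_ne_top n) one_ne_zero)
  · rintro ⟨m, hm, hxy⟩
    obtain ⟨p, hp, rfl, rfl⟩ := hxy.exists_isWalk
    have hwalk : ddist E (p 0) (p (Fin.last m)) ≤ m := sInf_le ⟨m, p, hp, rfl, rfl, rfl⟩
    exact hwalk.trans (by exact_mod_cast hm)

theorem finite_setOf_reachIn (hE : ∀ x, {y | E x y}.Finite) (x : V) :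
    ∀ n, {y | ReachIn E n x y}.Finite
  | 0 => (finite_singleton x).subset fun _ (hxy : x = _) => hxy.symm
  | n + 1 => ((finite_setOf_reachIn hE x n).biUnion fun w _ => hE w).subset
      fun _ ⟨_, hxw, hwz⟩ => mem_biUnion hxw hwz

theorem finite_outBallD (hE : ∀ x, {y | E x y}.Finite) (x : V) (n : ℕ) :
    (outBallD E x n).Finite :=
  ((Set.finite_le_nat n).biUnion fun m _ => finite_setOf_reachIn hE x m).subset fun _ hy =>
    let ⟨_, hm, hxy⟩ := ddist_le_iff.mp hy
    mem_biUnion hm hxy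

theorem inBallD_subset_outBallD_flip (x : V) (n : ℕ) :
    inBallD E x n ⊆ outBallD (flip E) x n := fun _ hy =>
  let ⟨m, hm, hyx⟩ := ddist_le_iff.mp hy
  ddist_le_iff.mpr ⟨m, hm, hyx.flip⟩

theorem finite_inBallD (hE : ∀ x, {y | E y x}.Finite) (x : V) (n : ℕ) :
    (inBallD E x n).Finite :=
  (finite_outBallD (E := flip E) hE x n).subset (inBallD_subset_outBallD_flip x n)

theorem outBallD_mono {x : V} {ρ σ : ℝ≥0∞} (h : ρ ≤ σ) : outBallD E x ρ ⊆ outBallD E x σ :=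
  fun _ hy => le_trans hy h

theorem outBallD_subset_of_mem {x y : V} {m k : ℕ} (hy : y ∈ outBallD E x m) :
    outBallD E y k ⊆ outBallD E x ↑(m + k) := fun _ hz =>
  let ⟨m', hm', hxy⟩ := ddist_le_iff.mp hy
  let ⟨k', hk', hyz⟩ := ddist_le_iff.mp hz
  ddist_le_iff.mpr ⟨m' + k', by omega, hxy.add hyz⟩

theorem IsPathFromTo.exists_subset_outBallD {A B S : Set V} (hS : IsPathFromTo E A B S) :
    ∃ a ∈ A, ∃ n : ℕ, S ⊆ outBallD E a n := by
  obtain ⟨n, p, hp, hA, -, rfl⟩ := hS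
  refine ⟨p 0, hA, n, ?_⟩
  rintro _ ⟨j, rfl⟩
  exact ddist_le_iff.mpr ⟨j, j.is_le, hp.reachIn j⟩

theorem IsRayD.reachIn {r : ℕ → V} (h : IsRayD E r) (a k : ℕ) :
    ReachIn E k (r a) (r (a + k)) := by
  induction k with
  | zero => rfl
  | succ k ih => exact ⟨r (a + k), ih, h.2 _⟩

theorem IsAntiRayD.reachIn {r : ℕ → V} (h : IsAntiRayD E r) (a k : ℕ) :
    ReachIn E k (r (a + k)) (r a) := by
  induction k generalizing a with
  | zero => rfl
  | succ k ih => exact ⟨r (a + 1), by simpa [add_right_comm, add_assoc] using ih (a + 1), h.2 a⟩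

theorem exists_common_source {r : ℕ → V} (h : IsRayD E r ∨ IsAntiRayD E r) (a b : ℕ) :
    ∃ c, ∃ d : ℕ, r a ∈ outBallD E (r c) d ∧ r b ∈ outBallD E (r c) d := by
  rcases h with h | h
  · refine ⟨0, a + b, ddist_le_iff.mpr ⟨a, by omega, ?_⟩, ddist_le_iff.mpr ⟨b, by omega, ?_⟩⟩
    · simpa using h.reachIn 0 a
    · simpa using h.reachIn 0 b
  · refine ⟨a + b, a + b, ddist_le_iff.mpr ⟨b, by omega, h.reachIn a b⟩,
      ddist_le_iff.mpr ⟨a, by omega, ?_⟩⟩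
    simpa [add_comm] using h.reachIn b a

theorem exists_outBallD_superset_union {r : ℕ → V} (h : IsRayD E r ∨ IsAntiRayD E r)
    {T S : Set V} {a b ρ σ : ℕ} (hT : T ⊆ outBallD E (r a) ρ) (hS : S ⊆ outBallD E (r b) σ) :
    ∃ c, ∃ ρ' : ℕ, T ∪ S ⊆ outBallD E (r c) ρ' := by
  obtain ⟨c, d, ha, hb⟩ := exists_common_source h a b
  refine ⟨c, d + max ρ σ, union_subset ?_ ?_⟩
  · exact hT.trans <| (outBallD_subset_of_mem ha).trans (outBallD_mono (by gcongr; omega))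
  · exact hS.trans <| (outBallD_subset_of_mem hb).trans (outBallD_mono (by gcongr; omega))

theorem infDisjPaths_of_forall_disjoint_outBallD {r : ℕ → V} (h : IsRayD E r ∨ IsAntiRayD E r)
    {B : Set V}
    (H : ∀ (x : V) (ρ : ℕ), ∃ S, IsPathFromTo E (range r) B S ∧ Disjoint S (outBallD E x ρ)) :
    InfDisjPaths E (range r) B := by
  obtain ⟨F, hF, hdisj⟩ := exists_pairwise_disjoint_of_forall_exists_disjoint
    (P := fun T => ∃ c, ∃ ρ : ℕ, T ⊆ outBallD E (r c) ρ) ⟨0, 0, empty_subset _⟩ <| by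
      rintro T ⟨c, ρ, hT⟩
      obtain ⟨S, hS, hST⟩ := H (r c) ρ
      obtain ⟨_, ⟨i, rfl⟩, n, hSn⟩ := hS.exists_subset_outBallD
      exact ⟨S, hS, hST.mono_right hT, exists_outBallD_superset_union h hT hSn⟩
  exact ⟨F, hF, fun k l hkl => hdisj hkl⟩

end Reachability

theorem stmt_5_general {V : Type*} (E : V → V → Prop)
    (hlf : ∀ x : V, {y : V | E x y}.Finite ∧ {y : V | E y x}.Finite)
    (r₁ r₂ : ℕ → V) (h₁ : IsRayD E r₁ ∨ IsAntiRayD E r₁) :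
    InfDisjPaths E (Set.range r₁) (Set.range r₂) ↔
      ∀ (x : V) (ρ : ℕ), ∃ S : Set V,
        IsPathFromTo E (Set.range r₁) (Set.range r₂) S ∧
        S ∩ (outBallD E x ρ ∪ inBallD E x ρ) = ∅ := by
  constructor
  · rintro ⟨F, hF, hdisj⟩ x ρ
    have hball : (outBallD E x ρ ∪ inBallD E x ρ).Finite :=
      (finite_outBallD (fun y => (hlf y).1) x ρ).union (finite_inBallD (fun y => (hlf y).2) x ρ)
    obtain ⟨k, hk⟩ := hball.exists_disjoint_of_pairwise_disjoint fun k l hkl => hdisj k l hkl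
    exact ⟨F k, hF k, disjoint_iff_inter_eq_empty.mp hk⟩
  · intro H
    refine infDisjPaths_of_forall_disjoint_outBallD h₁ fun x ρ => ?_
    obtain ⟨S, hS, hSball⟩ := H x ρ
    exact ⟨S, hS, (disjoint_iff_inter_eq_empty.mpr hSball).mono_right subset_union_left⟩

/-- In a locally finite digraph, for rays or anti-rays `r₁`, `r₂`: there are
infinitely many pairwise disjoint directed `r₁`-`r₂` paths iff for every vertex `x`
and every radius `ρ` there is a directed `r₁`-`r₂` path avoiding
`B⁺_ρ(x) ∪ B⁻_ρ(x)`. -/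
theorem stmt_5 {V : Type*} (E : V → V → Prop)
    (hlf : ∀ x : V, {y : V | E x y}.Finite ∧ {y : V | E y x}.Finite)
    (r₁ r₂ : ℕ → V) (h₁ : IsRayD E r₁ ∨ IsAntiRayD E r₁)
    (h₂ : IsRayD E r₂ ∨ IsAntiRayD E r₂) :
    InfDisjPaths E (Set.range r₁) (Set.range r₂) ↔
      ∀ (x : V) (ρ : ℕ), ∃ S : Set V,
        IsPathFromTo E (Set.range r₁) (Set.range r₂) S ∧
        S ∩ (outBallD E x ρ ∪ inBallD E x ρ) = ∅ :=
  stmt_5_general E hlf r₁ r₂ h₁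
end

section
/- Quasi-isometries between locally finite digraphs induce order-preserving bijections between their sets of ends: if f : D₁ → D₂ is a quasi-isometry of locally finite digraphs, then there is a bijection between Ω(D₁) and Ω(D₂) preserving the order ≼ on ends. -/
open Set
open scoped ENNReal NNReal

section Ends

variable {V : Type*}

/-- Rays and anti-rays of a digraph. -/
def RA (E : V → V → Prop) := {r : ℕ → V // IsRayD E r ∨ IsAntiRayD E r}

def endrel (E : V → V → Prop) : RA E → RA E → Prop := fun r q =>
  InfDisjPaths E (Set.range r.1) (Set.range q.1) ∧
  InfDisjPaths E (Set.range q.1) (Set.range r.1)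

/-- The set of ends of a digraph. -/
def Ends (E : V → V → Prop) := Quot (endrel E)

/-- The order `≼` induced on the ends. -/
def endle (E : V → V → Prop) : Ends E → Ends E → Prop := fun a b =>
  ∃ r q : RA E, Quot.mk (endrel E) r = a ∧ Quot.mk (endrel E) q = b ∧
    InfDisjPaths E (Set.range r.1) (Set.range q.1)

/-- `(γ,c)`-quasi-isometries between digraphs. -/
def DQI {V₁ V₂ : Type*} (E₁ : V₁ → V₁ → Prop) (E₂ : V₂ → V₂ → Prop)
    (γ c : ℝ≥0) (f : V₁ → V₂) : Prop :=
  (∀ x x' : V₁,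
    (γ : ℝ≥0∞)⁻¹ * ddist E₁ x x' - c ≤ ddist E₂ (f x) (f x') ∧
    ddist E₂ (f x) (f x') ≤ γ * ddist E₁ x x' + c) ∧
  ∀ y : V₂, ∃ x : V₁, ddist E₂ (f x) y ≤ c ∧ ddist E₂ y (f x) ≤ c

end Ends

namespace QIE

variable {V : Type*}

/-- Walks indexed by `ℕ`. -/
def WalkN (E : V → V → Prop) (n : ℕ) (p : ℕ → V) : Prop := ∀ i < n, E (p i) (p (i+1))

def Fwd (E : V → V → Prop) (w : ℕ → V) : Prop := ∀ t, E (w t) (w (t+1))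

def flipE (E : V → V → Prop) : V → V → Prop := fun a b => E b a

lemma isWalk_of_walkN {E : V → V → Prop} {n : ℕ} {p : ℕ → V} (h : WalkN E n p) :
    IsWalk E n (fun i : Fin (n+1) => p i) := by
  intro i
  simpa using h i i.2

lemma range_fin_eq_image {n : ℕ} (p : ℕ → V) :
    Set.range (fun i : Fin (n+1) => p i) = p '' Set.Iic n := by
  ext v
  constructor
  · rintro ⟨i, rfl⟩
    exact ⟨i, Nat.lt_succ_iff.mp i.2, rfl⟩
  · rintro ⟨j, hj, rfl⟩
    exact ⟨⟨j, Nat.lt_succ_of_le hj⟩, rfl⟩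

lemma isPathFromTo_walkN {E : V → V → Prop} {A B : Set V} {n : ℕ} {p : ℕ → V}
    (h : WalkN E n p) (h0 : p 0 ∈ A) (hn : p n ∈ B) :
    IsPathFromTo E A B (p '' Set.Iic n) :=
  ⟨n, fun i : Fin (n+1) => p i, isWalk_of_walkN h, by simpa using h0,
    by simpa [Fin.last] using hn, (range_fin_eq_image p).symm⟩

lemma isPathFromTo_elim {E : V → V → Prop} {A B S : Set V} (h : IsPathFromTo E A B S) :
    ∃ (n : ℕ) (p : ℕ → V), WalkN E n p ∧ p 0 ∈ A ∧ p n ∈ B ∧ S = p '' Set.Iic n := by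
  obtain ⟨n, p, hw, h0, hn, hS⟩ := h
  refine ⟨n, fun t => p ⟨min t n, Nat.lt_succ_of_le (min_le_right _ _)⟩, ?_, ?_, ?_, ?_⟩
  · intro i hi
    have h1 : min i n = i := min_eq_left hi.le
    have h2 : min (i+1) n = i + 1 := min_eq_left hi
    have := hw ⟨i, hi⟩
    simp only [Fin.castSucc, Fin.succ] at this
    convert this using 2 <;> simp [h1, h2]
  · simpa using h0
  · simpa [Fin.last] using hn
  · rw [hS]
    ext v
    constructor
    · rintro ⟨i, rfl⟩
      refine ⟨i, Nat.lt_succ_iff.mp i.2, ?_⟩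
      have hmin : min (i : ℕ) n = (i : ℕ) := min_eq_left (Nat.lt_succ_iff.mp i.2)
      simp [hmin, Fin.eta]
    · rintro ⟨j, hj, rfl⟩
      exact ⟨⟨min j n, Nat.lt_succ_of_le (min_le_right _ _)⟩, rfl⟩

lemma isPathFromTo_finite {E : V → V → Prop} {A B S : Set V} (h : IsPathFromTo E A B S) :
    S.Finite := by
  obtain ⟨n, p, -, -, -, hS⟩ := h
  rw [hS]; exact Set.finite_range p

lemma ddist_le_walkN {E : V → V → Prop} {n : ℕ} {p : ℕ → V} {x y : V}
    (h : WalkN E n p) (h0 : p 0 = x) (hn : p n = y) :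
    ddist E x y ≤ n :=
  sInf_le ⟨n, fun i : Fin (n+1) => p i, isWalk_of_walkN h, by simpa using h0,
    by simpa [Fin.last] using hn, rfl⟩

lemma exists_walkN_of_ddist_le {E : V → V → Prop} {x y : V} {n : ℕ} (h : ddist E x y ≤ (n : ℝ≥0∞)) :
    ∃ m ≤ n, ∃ p : ℕ → V, WalkN E m p ∧ p 0 = x ∧ p m = y := by
  have h' : ddist E x y < ((n+1 : ℕ) : ℝ≥0∞) := lt_of_le_of_lt h (by exact_mod_cast Nat.lt_succ_self n)
  obtain ⟨a, ha, hlt⟩ := sInf_lt_iff.mp h'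
  obtain ⟨m, p, hw, h0, hl, rfl⟩ := ha
  have hmn : m ≤ n := by exact_mod_cast Nat.lt_succ_iff.mp (by exact_mod_cast hlt)
  refine ⟨m, hmn, fun t => p ⟨min t m, Nat.lt_succ_of_le (min_le_right _ _)⟩, ?_, ?_, ?_⟩
  · intro i hi
    have h1 : min i m = i := min_eq_left hi.le
    have h2 : min (i+1) m = i + 1 := min_eq_left hi
    have := hw ⟨i, hi⟩
    simp only [Fin.castSucc, Fin.succ] at this
    convert this using 2 <;> simp [h1, h2]
  · simpa using h0
  · simpa [Fin.last] using hl

lemma ddist_self (E : V → V → Prop) (x : V) : ddist E x x = 0 := by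
  refine le_antisymm ?_ zero_le
  have : WalkN E 0 (fun _ => x) := fun i hi => absurd hi (Nat.not_lt_zero i)
  simpa using ddist_le_walkN this rfl rfl

lemma ddist_le_one {E : V → V → Prop} {x y : V} (h : E x y) : ddist E x y ≤ 1 := by
  have hw : WalkN E 1 (fun t => if t = 0 then x else y) := by
    intro i hi
    interval_cases i
    simpa using h
  simpa using ddist_le_walkN hw (by simp) (by simp)

end QIE
namespace QIE

variable {V : Type*}

/-- Concatenation of walks. -/
def cat (m : ℕ) (p q : ℕ → V) : ℕ → V := fun t => if t < m then p t else q (t - m)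

lemma cat_walk {E : V → V → Prop} {m n : ℕ} {p q : ℕ → V}
    (hp : WalkN E m p) (hq : WalkN E n q) (hpq : p m = q 0) :
    WalkN E (m + n) (cat m p q) := by
  intro i hi
  unfold cat
  by_cases h1 : i < m
  · by_cases h2 : i + 1 < m
    · simpa [h1, h2] using hp i h1
    · have h3 : i + 1 = m := by omega
      simp only [if_pos h1, if_neg (by omega : ¬ i + 1 < m)]
      rw [show i + 1 - m = 0 by omega, ← hpq, ← h3]
      exact hp i h1
  · have : ¬ i + 1 < m := by omega
    simp only [if_neg h1, if_neg this]
    rw [show i + 1 - m = (i - m) + 1 by omega]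
    exact hq (i - m) (by omega)

lemma cat_zero {m : ℕ} {p q : ℕ → V} (hpq : p m = q 0) : cat m p q 0 = p 0 := by
  unfold cat
  by_cases h : 0 < m
  · simp [h]
  · have hm : m = 0 := by omega
    subst hm
    simp [hpq]

lemma cat_last {m n : ℕ} {p q : ℕ → V} : cat m p q (m + n) = q n := by
  unfold cat
  have h : ¬ m + n < m := by omega
  simp [h]

lemma cat_image {m n : ℕ} {p q : ℕ → V} :
    cat m p q '' Set.Iic (m + n) ⊆ p '' Set.Iic m ∪ q '' Set.Iic n := by
  rintro v ⟨t, ht, rfl⟩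
  simp only [Set.mem_Iic] at ht
  by_cases h : t < m
  · exact Or.inl ⟨t, h.le, by simp [cat, h]⟩
  · exact Or.inr ⟨t - m, by simp only [Set.mem_Iic]; omega, by simp [cat, h]⟩

lemma exists_walkN_of_mem {E : V → V → Prop} {x y : V} {m : ℝ≥0∞}
    (h : ∃ (n : ℕ) (p : Fin (n+1) → V), IsWalk E n p ∧ p 0 = x ∧ p (Fin.last n) = y ∧ m = n) :
    ∃ n : ℕ, m = (n : ℝ≥0∞) ∧ ∃ p : ℕ → V, WalkN E n p ∧ p 0 = x ∧ p n = y := by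
  obtain ⟨n, p, hw, h0, hl, rfl⟩ := h
  refine ⟨n, rfl, fun t => p ⟨min t n, Nat.lt_succ_of_le (min_le_right _ _)⟩, ?_, ?_, ?_⟩
  · intro i hi
    have h1 : min i n = i := min_eq_left hi.le
    have h2 : min (i+1) n = i + 1 := min_eq_left hi
    have := hw ⟨i, hi⟩
    simp only [Fin.castSucc, Fin.succ] at this
    convert this using 2 <;> simp [h1, h2]
  · simpa using h0
  · simpa [Fin.last] using hl

lemma ddist_triangle (E : V → V → Prop) (x y z : V) :
    ddist E x z ≤ ddist E x y + ddist E y z := by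
  rw [ddist, ddist, ENNReal.sInf_add]
  refine le_iInf₂ fun m₁ hm₁ => ?_
  rw [add_comm m₁, ddist, ENNReal.sInf_add]
  refine le_iInf₂ fun m₂ hm₂ => ?_
  obtain ⟨n₁, rfl, p₁, hw₁, h10, h11⟩ := exists_walkN_of_mem hm₁
  obtain ⟨n₂, rfl, p₂, hw₂, h20, h21⟩ := exists_walkN_of_mem hm₂
  have hcat := cat_walk hw₁ hw₂ (h11.trans h20.symm)
  have := ddist_le_walkN hcat (by rw [cat_zero (h11.trans h20.symm), h10]) (by rw [cat_last, h21])
  calc ddist E x z ≤ ((n₁ + n₂ : ℕ) : ℝ≥0∞) := this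
    _ = (n₂ : ℝ≥0∞) + n₁ := by push_cast; ring

end QIE
namespace QIE

variable {V : Type*}

lemma walkN_flip {E : V → V → Prop} {n : ℕ} {p : ℕ → V} (h : WalkN E n p) :
    WalkN (flipE E) n (fun t => p (n - t)) := by
  intro i hi
  have h1 : n - (i+1) + 1 = n - i := by omega
  have := h (n - (i+1)) (by omega)
  rw [h1] at this
  exact this

lemma flipE_flipE (E : V → V → Prop) : flipE (flipE E) = E := rfl

lemma ddist_flip (E : V → V → Prop) (x y : V) : ddist (flipE E) x y = ddist E y x := by
  have key : ∀ (E : V → V → Prop) (x y : V) (m : ℝ≥0∞),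
      (∃ (n : ℕ) (p : Fin (n+1) → V), IsWalk E n p ∧ p 0 = x ∧ p (Fin.last n) = y ∧ m = n) →
      (∃ (n : ℕ) (p : Fin (n+1) → V), IsWalk (flipE E) n p ∧ p 0 = y ∧ p (Fin.last n) = x ∧ m = n) := by
    intro E x y m hm
    obtain ⟨n, rfl, p, hw, h0, hn⟩ := exists_walkN_of_mem hm
    have hr : WalkN (flipE E) n (fun t => p (n - t)) := walkN_flip hw
    obtain ⟨n', hn', p', hw', h0', hn''⟩ := exists_walkN_of_mem (m := (n : ℝ≥0∞))
      ⟨n, fun i : Fin (n+1) => p (n - i), isWalk_of_walkN hr, by simpa using hn,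
        by simpa [Fin.last] using h0, rfl⟩
    exact ⟨n, fun i : Fin (n+1) => p (n - i), isWalk_of_walkN hr, by simpa using hn,
        by simpa [Fin.last] using h0, rfl⟩
  unfold ddist
  congr 1
  ext m
  constructor
  · exact key (flipE E) x y m
  · exact key E y x m

lemma isPathFromTo_flip {E : V → V → Prop} {A B S : Set V} (h : IsPathFromTo E A B S) :
    IsPathFromTo (flipE E) B A S := by
  obtain ⟨n, p, hw, h0, hn, hS⟩ := isPathFromTo_elim h
  have hr : WalkN (flipE E) n (fun t => p (n - t)) := walkN_flip hw
  have := isPathFromTo_walkN hr (by simpa using hn) (by simpa using h0)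
  convert this using 1
  rw [hS]
  ext v
  constructor
  · rintro ⟨t, ht, rfl⟩
    simp only [Set.mem_Iic] at ht
    exact ⟨n - t, by simp only [Set.mem_Iic]; omega, by simp only; congr 1; omega⟩
  · rintro ⟨t, ht, rfl⟩
    exact ⟨n - t, by simp only [Set.mem_Iic]; omega, rfl⟩

lemma infDisjPaths_flip {E : V → V → Prop} {A B : Set V} :
    InfDisjPaths (flipE E) A B ↔ InfDisjPaths E B A := by
  constructor
  · rintro ⟨F, hF, hd⟩
    exact ⟨F, fun k => isPathFromTo_flip (hF k), hd⟩
  · rintro ⟨F, hF, hd⟩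
    exact ⟨F, fun k => isPathFromTo_flip (hF k), hd⟩

lemma dqi_flip {V₁ V₂ : Type*} {E₁ : V₁ → V₁ → Prop} {E₂ : V₂ → V₂ → Prop} {γ c : ℝ≥0}
    {f : V₁ → V₂} (h : DQI E₁ E₂ γ c f) : DQI (flipE E₁) (flipE E₂) γ c f := by
  constructor
  · intro x x'
    rw [ddist_flip, ddist_flip]
    exact h.1 x' x
  · intro y
    obtain ⟨x, h1, h2⟩ := h.2 y
    exact ⟨x, by rwa [ddist_flip], by rwa [ddist_flip]⟩

lemma outBall_finite {E : V → V → Prop} (hlf : ∀ x : V, {y : V | E x y}.Finite) (x : V) :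
    ∀ n : ℕ, (outBallD E x n).Finite := by
  intro n
  induction n with
  | zero =>
    refine Set.Finite.subset (Set.finite_singleton x) ?_
    intro y hy
    obtain ⟨m, hm, p, hw, h0, hn⟩ := exists_walkN_of_ddist_le (n := 0) hy
    interval_cases m
    simp [← h0, hn]
  | succ n ih =>
    have hsub : outBallD E x (n+1 : ℕ) ⊆ outBallD E x n ∪ ⋃ v ∈ outBallD E x n, {y | E v y} := by
      intro y hy
      obtain ⟨m, hm, p, hw, h0, hn⟩ := exists_walkN_of_ddist_le (n := n+1) hy
      by_cases hc : m ≤ n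
      · left
        calc ddist E x y ≤ (m : ℝ≥0∞) := ddist_le_walkN hw h0 hn
          _ ≤ (n : ℝ≥0∞) := by exact_mod_cast hc
      · have hm' : m = n + 1 := by omega
        subst hm'
        right
        have hv : ddist E x (p n) ≤ (n : ℝ≥0∞) :=
          ddist_le_walkN (fun i hi => hw i (by omega)) h0 rfl
        refine Set.mem_biUnion hv ?_
        have := hw n (by omega)
        rwa [hn] at this
    exact (ih.union (ih.biUnion (fun v _ => hlf v))).subset hsub

lemma inBall_finite {E : V → V → Prop} (hlf : ∀ x : V, {y : V | E y x}.Finite) (x : V) (n : ℕ) :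
    (inBallD E x n).Finite := by
  have : inBallD E x n = outBallD (flipE E) x n := by
    ext y; simp only [inBallD, outBallD, Set.mem_setOf_eq, ddist_flip]
  rw [this]
  exact outBall_finite (fun v => hlf v) x n

def Proper (w : ℕ → V) : Prop := ∀ v, {t | w t = v}.Finite

lemma proper_of_injective {w : ℕ → V} (h : Function.Injective w) : Proper w := by
  intro v
  refine Set.Subsingleton.finite ?_
  intro a ha b hb
  exact h (ha.trans hb.symm)

lemma proper_escape {w : ℕ → V} (hw : Proper w) {U : Set V} (hU : U.Finite) :
    ∃ T, ∀ t, T ≤ t → w t ∉ U := by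
  have hfin : {t | w t ∈ U}.Finite := by
    refine (hU.biUnion (fun v _ => hw v)).subset ?_
    intro t ht
    exact Set.mem_biUnion ht rfl
  obtain ⟨T, hT⟩ := hfin.bddAbove
  exact ⟨T+1, fun t ht hmem => by have := hT hmem; omega⟩

lemma pigeon {α β : Type*} {I : Set α} (hI : I.Infinite) (g : α → β) {W : Set β}
    (hmap : ∀ i ∈ I, g i ∈ W) (hW : W.Finite) : ∃ u ∈ W, {i | i ∈ I ∧ g i = u}.Infinite := by
  by_contra h
  push_neg at h
  have hsub : I ⊆ ⋃ u ∈ W, {i | i ∈ I ∧ g i = u} :=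
    fun i hi => Set.mem_biUnion (hmap i hi) ⟨hi, rfl⟩
  exact hI ((hW.biUnion (fun u hu => (h u hu))).subset hsub)

lemma infDisjPaths_of_avoid {E : V → V → Prop} {A B : Set V}
    (h : ∀ U : Set V, U.Finite → ∃ S, IsPathFromTo E A B S ∧ Disjoint S U) :
    InfDisjPaths E A B := by
  classical
  let pick : {U : Set V // U.Finite} → Set V := fun U => (h U.1 U.2).choose
  have hpick : ∀ U : {U : Set V // U.Finite}, IsPathFromTo E A B (pick U) ∧ Disjoint (pick U) U.1 :=
    fun U => (h U.1 U.2).choose_spec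
  let T : ℕ → {U : Set V // U.Finite} := fun k =>
    Nat.rec ⟨∅, Set.finite_empty⟩ (fun _ U => ⟨U.1 ∪ pick U, U.2.union (isPathFromTo_finite (hpick U).1)⟩) k
  have hTsucc : ∀ k, (T (k+1)).1 = (T k).1 ∪ pick (T k) := fun k => rfl
  have hTmono : ∀ k l, k ≤ l → (T k).1 ⊆ (T l).1 := by
    intro k l hkl
    induction l with
    | zero => have : k = 0 := by omega
              subst this; exact subset_rfl
    | succ l ih =>
      rcases Nat.lt_succ_iff_lt_or_eq.mp (Nat.lt_succ_of_le hkl) with h' | h'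
      · exact (ih (by omega)).trans (by rw [hTsucc]; exact Set.subset_union_left)
      · subst h'; exact subset_rfl
  refine ⟨fun k => pick (T k), fun k => (hpick (T k)).1, ?_⟩
  have key : ∀ k l, k < l → Disjoint (pick (T k)) (pick (T l)) := by
    intro k l hkl
    have h1 : pick (T k) ⊆ (T l).1 := by
      have : pick (T k) ⊆ (T (k+1)).1 := by rw [hTsucc]; exact Set.subset_union_right
      exact this.trans (hTmono _ _ hkl)
    exact Set.disjoint_of_subset_left h1 (hpick (T l)).2.symm
  intro k l hkl
  rcases lt_or_gt_of_ne hkl with h' | h'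
  · exact key k l h'
  · exact (key l k h').symm

lemma bad_finite {F : ℕ → Set V} (hd : ∀ k l, k ≠ l → Disjoint (F k) (F l))
    {U : Set V} (hU : U.Finite) : {k | ¬ Disjoint (F k) U}.Finite := by
  classical
  have hsub : {k | ¬ Disjoint (F k) U} ⊆ ⋃ u ∈ U, {k | u ∈ F k} := by
    intro k hk
    obtain ⟨u, hu1, hu2⟩ := Set.not_disjoint_iff.mp hk
    exact Set.mem_biUnion hu2 hu1
  refine (hU.biUnion (fun u _ => ?_)).subset hsub
  refine Set.Subsingleton.finite ?_
  intro a ha b hb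
  by_contra hne
  exact Set.disjoint_left.mp (hd a b hne) ha hb

lemma exists_nat_notin {S : Set ℕ} (hS : S.Finite) : ∃ k, k ∉ S := by
  obtain ⟨T, hT⟩ := hS.bddAbove
  exact ⟨T+1, fun hmem => by have := hT hmem; omega⟩

lemma exists_path_avoid {E : V → V → Prop} {A B : Set V} (h : InfDisjPaths E A B)
    {U : Set V} (hU : U.Finite) : ∃ S, IsPathFromTo E A B S ∧ Disjoint S U := by
  obtain ⟨F, hF, hd⟩ := h
  obtain ⟨k, hk⟩ := exists_nat_notin (bad_finite hd hU)
  exact ⟨F k, hF k, not_not.mp hk⟩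

lemma infDisjPaths_of_family {E : V → V → Prop} {A B : Set V} (S : ℕ → Set V)
    (hS : ∀ k, IsPathFromTo E A B (S k)) (hfin : ∀ u, {k | u ∈ S k}.Finite) :
    InfDisjPaths E A B := by
  apply infDisjPaths_of_avoid
  intro U hU
  have hbad : {k | ¬ Disjoint (S k) U}.Finite := by
    refine (hU.biUnion (fun u _ => hfin u)).subset ?_
    intro k hk
    obtain ⟨u, hu1, hu2⟩ := Set.not_disjoint_iff.mp hk
    exact Set.mem_biUnion hu2 hu1
  obtain ⟨k, hk⟩ := exists_nat_notin hbad
  exact ⟨S k, hS k, not_not.mp hk⟩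

end QIE
namespace QIE

variable {V : Type*}

lemma segment_walk {E : V → V → Prop} {w : ℕ → V} (hw : Fwd E w) (a b : ℕ) :
    WalkN E (b - a) (fun s => w (a + s)) :=
  fun i _ => hw (a + i)

/-- From a proper forward walk that meets `A` and `B` cofinally, get infinitely many
disjoint `A`-`B` paths. -/
lemma infDisj_cofinal {E : V → V → Prop} {w : ℕ → V} (hw : Fwd E w) (hp : Proper w)
    {A B : Set V} (hA : ∀ T, ∃ t, T ≤ t ∧ w t ∈ A) (hB : ∀ T, ∃ t, T ≤ t ∧ w t ∈ B) :
    InfDisjPaths E A B := by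
  apply infDisjPaths_of_avoid
  intro U hU
  obtain ⟨T, hT⟩ := proper_escape hp hU
  obtain ⟨t₁, ht₁, hA₁⟩ := hA T
  obtain ⟨t₂, ht₂, hB₂⟩ := hB t₁
  refine ⟨(fun s => w (t₁ + s)) '' Set.Iic (t₂ - t₁),
    isPathFromTo_walkN (segment_walk hw t₁ t₂) (by simpa using hA₁)
      (by rw [show t₁ + (t₂ - t₁) = t₂ by omega]; exact hB₂), ?_⟩
  rw [Set.disjoint_left]
  rintro v ⟨s, hs, rfl⟩ hvU
  exact hT (t₁ + s) (by omega) hvU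

/-- Chaining disjoint path systems through a set lying on a proper forward walk. -/
lemma chain_fwd {E : V → V → Prop} {A B C : Set V} {w : ℕ → V}
    (hw : Fwd E w) (hp : Proper w) (hBw : B ⊆ Set.range w)
    (hAB : InfDisjPaths E A B) (hBC : InfDisjPaths E B C) :
    InfDisjPaths E A C := by
  apply infDisjPaths_of_avoid
  intro U hU
  obtain ⟨T, hT⟩ := proper_escape hp hU
  -- first path avoiding U and the initial segment of w
  have hfin1 : (U ∪ w '' Set.Iic T).Finite := hU.union ((Set.finite_Iic T).image w)
  obtain ⟨S₁, hS₁, hdisj₁⟩ := exists_path_avoid hAB hfin1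
  obtain ⟨n₁, p₁, hw₁, h₁0, h₁n, hS₁eq⟩ := isPathFromTo_elim hS₁
  -- the endpoint lies on w, at a late position
  obtain ⟨t₁, ht₁⟩ := hBw h₁n
  have hb1 : p₁ n₁ ∈ S₁ := by rw [hS₁eq]; exact ⟨n₁, Set.mem_Iic.mpr le_rfl, rfl⟩
  have ht₁T : T < t₁ := by
    by_contra hle
    exact Set.disjoint_left.mp hdisj₁ hb1 (Or.inr ⟨t₁, Set.mem_Iic.mpr (by omega), ht₁⟩)
  -- second path avoiding U and w up to t₁
  have hfin2 : (U ∪ w '' Set.Iic t₁).Finite := hU.union ((Set.finite_Iic t₁).image w)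
  obtain ⟨S₂, hS₂, hdisj₂⟩ := exists_path_avoid hBC hfin2
  obtain ⟨n₂, p₂, hw₂, h₂0, h₂n, hS₂eq⟩ := isPathFromTo_elim hS₂
  obtain ⟨t₂, ht₂⟩ := hBw h₂0
  have hb2 : p₂ 0 ∈ S₂ := by rw [hS₂eq]; exact ⟨0, Set.mem_Iic.mpr (Nat.zero_le _), rfl⟩
  have ht₂t₁ : t₁ < t₂ := by
    by_contra hle
    exact Set.disjoint_left.mp hdisj₂ hb2 (Or.inr ⟨t₂, Set.mem_Iic.mpr (by omega), ht₂⟩)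
  -- glue:  p₁  ++  w[t₁..t₂]  ++  p₂
  set seg : ℕ → V := fun s => w (t₁ + s) with hseg
  have hwseg : WalkN E (t₂ - t₁) seg := segment_walk hw t₁ t₂
  have hj1 : p₁ n₁ = seg 0 := by simp [hseg, ht₁]
  have hj2 : seg (t₂ - t₁) = p₂ 0 := by
    simp only [hseg]
    rw [show t₁ + (t₂ - t₁) = t₂ by omega, ht₂]
  have hcat1 : WalkN E (n₁ + (t₂ - t₁)) (cat n₁ p₁ seg) := cat_walk hw₁ hwseg hj1
  have hj3 : cat n₁ p₁ seg (n₁ + (t₂ - t₁)) = p₂ 0 := by rw [cat_last]; exact hj2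
  have hcat2 : WalkN E (n₁ + (t₂ - t₁) + n₂) (cat (n₁ + (t₂ - t₁)) (cat n₁ p₁ seg) p₂) :=
    cat_walk hcat1 hw₂ hj3
  refine ⟨_, isPathFromTo_walkN hcat2 ?_ ?_, ?_⟩
  · rw [cat_zero hj3, cat_zero hj1]; exact h₁0
  · rw [cat_last]; exact h₂n
  · have himg := (cat_image (m := n₁ + (t₂ - t₁)) (n := n₂)
      (p := cat n₁ p₁ seg) (q := p₂))
    rw [Set.disjoint_left]
    intro v hv hvU
    rcases himg hv with hv1 | hv2
    · rcases cat_image hv1 with hv3 | hv4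
      · rw [← hS₁eq] at hv3
        exact Set.disjoint_left.mp hdisj₁ hv3 (Or.inl hvU)
      · obtain ⟨s, hs, rfl⟩ := hv4
        exact hT (t₁ + s) (by omega) hvU
    · rw [← hS₂eq] at hv2
      exact Set.disjoint_left.mp hdisj₂ hv2 (Or.inl hvU)

end QIE
namespace QIE

variable {V : Type*}

/-- A set suitable as the middle term when chaining disjoint path systems. -/
def MidSet (E : V → V → Prop) (B : Set V) : Prop :=
  (∃ w : ℕ → V, Fwd E w ∧ Proper w ∧ B ⊆ Set.range w) ∨
  (∃ w : ℕ → V, Fwd (flipE E) w ∧ Proper w ∧ B ⊆ Set.range w)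

lemma chain {E : V → V → Prop} {A B C : Set V} (hB : MidSet E B)
    (h1 : InfDisjPaths E A B) (h2 : InfDisjPaths E B C) : InfDisjPaths E A C := by
  rcases hB with ⟨w, hw, hp, hsub⟩ | ⟨w, hw, hp, hsub⟩
  · exact chain_fwd hw hp hsub h1 h2
  · rw [← infDisjPaths_flip (E := E)]
    exact chain_fwd hw hp hsub (infDisjPaths_flip.mpr h2) (infDisjPaths_flip.mpr h1)

lemma midSet_flip {E : V → V → Prop} {B : Set V} (h : MidSet E B) : MidSet (flipE E) B := by
  rcases h with ⟨w, hw, hp, hsub⟩ | ⟨w, hw, hp, hsub⟩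
  · exact Or.inr ⟨w, hw, hp, hsub⟩
  · exact Or.inl ⟨w, hw, hp, hsub⟩

lemma midSet_RA {E : V → V → Prop} (q : RA E) : MidSet E (Set.range q.1) := by
  rcases q.2 with hq | hq
  · exact Or.inl ⟨q.1, hq.2, proper_of_injective hq.1, subset_rfl⟩
  · exact Or.inr ⟨q.1, hq.2, proper_of_injective hq.1, subset_rfl⟩

/-- Last-exit extraction of a ray from a proper forward walk. -/
lemma lastExit {E : V → V → Prop} {w : ℕ → V} (hw : Fwd E w) (hp : Proper w) :
    ∃ (q : ℕ → V) (τ : ℕ → ℕ), IsRayD E q ∧ StrictMono τ ∧ (∀ k, w (τ k) = q k) := by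
  classical
  have hbdd : ∀ v, BddAbove {t | w t = v} := fun v => (hp v).bddAbove
  let last : ℕ → ℕ := fun t => sSup {s | w s = w t}
  have hlast_mem : ∀ t, w (last t) = w t := fun t =>
    Nat.sSup_mem (s := {s | w s = w t}) ⟨t, rfl⟩ (hbdd (w t))
  have hlast_ge : ∀ t s, w s = w t → s ≤ last t := fun t s hs =>
    le_csSup (hbdd (w t)) hs
  let τ : ℕ → ℕ := fun k => Nat.rec (last 0) (fun _ τk => last (τk + 1)) k
  have hτ0 : τ 0 = last 0 := rfl
  have hτs : ∀ k, τ (k+1) = last (τ k + 1) := fun k => rfl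
  have hτmono : ∀ k, τ k < τ (k+1) := by
    intro k
    rw [hτs]
    have : τ k + 1 ≤ last (τ k + 1) := hlast_ge _ _ rfl
    omega
  -- each τ k is the last occurrence of its own vertex
  have hτcan : ∀ k, τ k = sSup {s | w s = w (τ k)} := by
    intro k
    cases k with
    | zero =>
      have h1 : w (τ 0) = w 0 := hlast_mem 0
      rw [show {s | w s = w (τ 0)} = {s | w s = w 0} from by rw [h1]]
      rfl
    | succ k =>
      have h1 : w (τ (k+1)) = w (τ k + 1) := by rw [hτs]; exact hlast_mem _
      rw [show {s | w s = w (τ (k+1))} = {s | w s = w (τ k + 1)} from by rw [h1]]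
  refine ⟨fun k => w (τ k), τ, ⟨?_, ?_⟩, strictMono_nat_of_lt_succ hτmono, fun k => rfl⟩
  · intro k l hkl
    have hkl' : w (τ k) = w (τ l) := hkl
    have : τ k = τ l := by
      rw [hτcan k, hτcan l, hkl']
    exact (strictMono_nat_of_lt_succ hτmono).injective this
  · intro k
    have h1 : w (τ (k+1)) = w (τ k + 1) := by rw [hτs]; exact hlast_mem _
    show E (w (τ k)) (w (τ (k+1)))
    rw [h1]
    exact hw (τ k)

/-- Gluing bounded-length walks between consecutive anchors. -/
lemma glue {E : V → V → Prop} (a : ℕ → V) (N : ℕ) (K : ℕ)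
    (h : ∀ j < K, ddist E (a j) (a (j+1)) ≤ (N : ℝ≥0∞)) :
    ∃ (m : ℕ) (p : ℕ → V), WalkN E m p ∧ p 0 = a 0 ∧ p m = a K ∧
      ∀ v ∈ p '' Set.Iic m, ∃ j ≤ K, ddist E (a j) v ≤ (N : ℝ≥0∞) := by
  induction K with
  | zero =>
    refine ⟨0, fun _ => a 0, fun i hi => absurd hi (Nat.not_lt_zero i), rfl, rfl, ?_⟩
    rintro v ⟨t, _, rfl⟩
    exact ⟨0, le_rfl, by rw [ddist_self]; exact zero_le⟩
  | succ K ih =>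
    obtain ⟨m, p, hwp, h0, hm, himg⟩ := ih (fun j hj => h j (by omega))
    obtain ⟨m₂, hm₂, p₂, hwp₂, h₂0, h₂m⟩ := exists_walkN_of_ddist_le (h K (by omega))
    have hj : p m = p₂ 0 := by rw [hm, h₂0]
    refine ⟨m + m₂, cat m p p₂, cat_walk hwp hwp₂ hj, by rw [cat_zero hj]; exact h0,
      by rw [cat_last]; exact h₂m, ?_⟩
    intro v hv
    rcases cat_image hv with hv1 | hv2
    · obtain ⟨j, hj', hd⟩ := himg v hv1
      exact ⟨j, by omega, hd⟩
    · obtain ⟨t, ht, rfl⟩ := hv2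
      simp only [Set.mem_Iic] at ht
      refine ⟨K, by omega, ?_⟩
      have : ddist E (p₂ 0) (p₂ t) ≤ (t : ℝ≥0∞) :=
        ddist_le_walkN (fun i hi => hwp₂ i (by omega)) rfl rfl
      rw [h₂0] at this
      calc ddist E (a K) (p₂ t) ≤ (t : ℝ≥0∞) := this
        _ ≤ (N : ℝ≥0∞) := by exact_mod_cast le_trans ht hm₂

end QIE
namespace QIE

variable {V : Type*}

lemma coe_le_ceil (x : ℝ≥0) : (x : ℝ≥0∞) ≤ ((⌈x⌉₊ : ℕ) : ℝ≥0∞) := by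
  rw [show ((⌈x⌉₊ : ℕ) : ℝ≥0∞) = ((⌈x⌉₊ : ℝ≥0) : ℝ≥0∞) by push_cast; rfl]
  exact ENNReal.coe_le_coe.mpr (Nat.le_ceil x)

lemma qi_upper1 {γ : ℝ≥0} (hγ : 1 ≤ γ) {d e c : ℝ≥0∞} (h : (γ : ℝ≥0∞)⁻¹ * d - c ≤ e) :
    d ≤ γ * e + γ * c := by
  have hγ0 : (γ : ℝ≥0∞) ≠ 0 := by
    simp only [ne_eq, ENNReal.coe_eq_zero]
    intro h0
    rw [h0] at hγ
    exact absurd hγ (by norm_num)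
  have hγt : (γ : ℝ≥0∞) ≠ ⊤ := ENNReal.coe_ne_top
  have h1 : (γ : ℝ≥0∞)⁻¹ * d ≤ e + c := tsub_le_iff_right.mp h
  calc d = (γ : ℝ≥0∞) * ((γ : ℝ≥0∞)⁻¹ * d) := by
        rw [← mul_assoc, ENNReal.mul_inv_cancel hγ0 hγt, one_mul]
    _ ≤ (γ : ℝ≥0∞) * (e + c) := mul_le_mul_right h1 _
    _ = γ * e + γ * c := mul_add _ _ _

section Shadow

lemma shadow {E : V → V → Prop} (hlfo : ∀ x : V, {y : V | E x y}.Finite)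
    {A B : Set V} (a b : ℕ → V) (K : ℕ)
    (ha : ∀ m, a m ∈ A) (hb : ∀ m, b m ∈ B)
    (hd : ∀ m, ddist E (a m) (b m) ≤ (K : ℝ≥0∞))
    (hbi : Function.Injective b) : InfDisjPaths E A B := by
  choose n hn p hwp h0 hl using fun m => exists_walkN_of_ddist_le (hd m)
  apply infDisjPaths_of_family (S := fun m => p m '' Set.Iic (n m))
  · intro m
    exact isPathFromTo_walkN (hwp m) (by rw [h0 m]; exact ha m) (by rw [hl m]; exact hb m)
  · intro u
    rw [← Set.not_infinite]
    intro hinf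
    have hmap : ∀ m ∈ {m | u ∈ p m '' Set.Iic (n m)}, b m ∈ outBallD E u K := by
      intro m hm
      obtain ⟨t, ht, hteq⟩ := hm
      simp only [Set.mem_Iic] at ht
      have : ddist E (p m t) (p m (n m)) ≤ ((n m - t : ℕ) : ℝ≥0∞) :=
        ddist_le_walkN (n := n m - t) (p := fun s => p m (t + s))
          (fun i hi => hwp m (t + i) (by omega)) rfl
          (by show p m (t + (n m - t)) = p m (n m); congr 1; omega)
      rw [hteq, hl m] at this
      have hcast : ((n m - t : ℕ) : ℝ≥0∞) ≤ (K : ℝ≥0∞) := by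
        exact_mod_cast (by have := hn m; omega : n m - t ≤ K)
      exact le_trans this hcast
    obtain ⟨v₀, -, hI⟩ := pigeon hinf b hmap (outBall_finite hlfo u K)
    obtain ⟨m₁, hm₁, m₂, hm₂, hne⟩ := hI.nontrivial
    exact hne (hbi (hm₁.2.trans hm₂.2.symm))

end Shadow

section PushPull

variable {V₁ V₂ : Type*} {E₁ : V₁ → V₁ → Prop} {E₂ : V₂ → V₂ → Prop} {γ c : ℝ≥0} {f : V₁ → V₂}

lemma qi_dist_le (hf : DQI E₁ E₂ γ c f) (x x' : V₁) :
    ddist E₂ (f x) (f x') ≤ γ * ddist E₁ x x' + c := (hf.1 x x').2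

lemma qi_dist_pull (hγ : 1 ≤ γ) (hf : DQI E₁ E₂ γ c f) (x x' : V₁) :
    ddist E₁ x x' ≤ γ * ddist E₂ (f x) (f x') + γ * c := qi_upper1 hγ (hf.1 x x').1

/-- Images of infinitely many disjoint paths give infinitely many disjoint paths between
the images. -/
lemma push (hγ : 1 ≤ γ) (hf : DQI E₁ E₂ γ c f)
    (hlf₁o : ∀ x : V₁, {y : V₁ | E₁ x y}.Finite) (hlf₂i : ∀ x : V₂, {y : V₂ | E₂ y x}.Finite)
    {A B : Set V₁} (h : InfDisjPaths E₁ A B) :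
    InfDisjPaths E₂ (f '' A) (f '' B) := by
  classical
  set N : ℕ := ⌈(γ + c : ℝ≥0)⌉₊ with hN
  set M : ℕ := ⌈(γ * c : ℝ≥0)⌉₊ with hM
  obtain ⟨F, hF, hd⟩ := h
  choose n p hwp h0 hn hSeq using fun k => isPathFromTo_elim (hF k)
  have hgap : ∀ k, ∀ j < n k, ddist E₂ (f (p k j)) (f (p k (j+1))) ≤ (N : ℝ≥0∞) := by
    intro k j hj
    calc ddist E₂ (f (p k j)) (f (p k (j+1)))
        ≤ γ * ddist E₁ (p k j) (p k (j+1)) + c := qi_dist_le hf _ _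
      _ ≤ γ * 1 + c := by
          gcongr
          exact ddist_le_one (hwp k j hj)
      _ = ((γ + c : ℝ≥0) : ℝ≥0∞) := by push_cast; rw [mul_one]
      _ ≤ (N : ℝ≥0∞) := coe_le_ceil _
  choose m W hwW hW0 hWm hanchor using fun k => glue (E := E₂) (fun j => f (p k j)) N (n k) (hgap k)
  apply infDisjPaths_of_family (S := fun k => W k '' Set.Iic (m k))
  · intro k
    exact isPathFromTo_walkN (hwW k) (by rw [hW0 k]; exact Set.mem_image_of_mem f (h0 k))
      (by rw [hWm k]; exact Set.mem_image_of_mem f (hn k))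
  · intro u
    rw [← Set.not_infinite]
    intro hinf
    set I := {k | u ∈ W k '' Set.Iic (m k)} with hI
    have hanch : ∀ k, k ∈ I → ∃ j, j ≤ n k ∧ ddist E₂ (f (p k j)) u ≤ (N : ℝ≥0∞) := by
      intro k hk
      obtain ⟨j, hj1, hj2⟩ := hanchor k u hk
      exact ⟨j, hj1, hj2⟩
    choose! j hj hdj using hanch
    obtain ⟨z, -, hI₁⟩ := pigeon hinf (fun k => f (p k (j k)))
      (fun k hk => hdj k hk) (inBall_finite hlf₂i u N)
    set I₁ := {k | k ∈ I ∧ f (p k (j k)) = z} with hI₁def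
    obtain ⟨k₀, hk₀⟩ := hI₁.nonempty
    have hclose : ∀ k ∈ I₁, p k (j k) ∈ outBallD E₁ (p k₀ (j k₀)) M := by
      intro k hk
      have hzz : ddist E₂ (f (p k₀ (j k₀))) (f (p k (j k))) = 0 := by
        rw [hk₀.2, hk.2, ddist_self]
      have := qi_dist_pull hγ hf (p k₀ (j k₀)) (p k (j k))
      rw [hzz, mul_zero, zero_add] at this
      exact le_trans this (coe_le_ceil _)
    obtain ⟨x₀, -, hI₂⟩ := pigeon hI₁ (fun k => p k (j k)) hclose
      (outBall_finite hlf₁o (p k₀ (j k₀)) M)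
    obtain ⟨m₁, hm₁, m₂, hm₂, hne⟩ := hI₂.nontrivial
    have hx1 : x₀ ∈ F m₁ := by
      rw [hSeq m₁, ← hm₁.2]
      exact ⟨j m₁, Set.mem_Iic.mpr (hj m₁ hm₁.1.1), rfl⟩
    have hx2 : x₀ ∈ F m₂ := by
      rw [hSeq m₂, ← hm₂.2]
      exact ⟨j m₂, Set.mem_Iic.mpr (hj m₂ hm₂.1.1), rfl⟩
    exact Set.disjoint_left.mp (hd m₁ m₂ hne) hx1 hx2

end PushPull

end QIE
namespace QIE

section Pull

variable {V₁ V₂ : Type*} {E₁ : V₁ → V₁ → Prop} {E₂ : V₂ → V₂ → Prop} {γ c : ℝ≥0} {f : V₁ → V₂}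

/-- Disjoint path systems between images pull back along a quasi-isometry. -/
lemma pull (hγ : 1 ≤ γ) (hf : DQI E₁ E₂ γ c f)
    (hlf₁i : ∀ x : V₁, {y : V₁ | E₁ y x}.Finite) (hlf₂o : ∀ x : V₂, {y : V₂ | E₂ x y}.Finite)
    {A B : Set V₁} (h : InfDisjPaths E₂ (f '' A) (f '' B)) :
    InfDisjPaths E₁ A B := by
  classical
  set M' : ℕ := ⌈(γ * (2 * c + 1) + γ * c : ℝ≥0)⌉₊ with hM'
  set Nc : ℕ := ⌈(c : ℝ≥0)⌉₊ with hNc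
  choose finv hc1 hc2 using hf.2
  obtain ⟨F, hF, hd⟩ := h
  choose n p hwp h0 hn hSeq using fun k => isPathFromTo_elim (hF k)
  choose a ha hfa using h0
  choose b hb hfb using hn
  -- anchor sequences
  set ξ : ℕ → ℕ → V₁ := fun k j =>
    if j = 0 then a k else if j ≤ n k + 1 then finv (p k (j - 1)) else b k with hξ
  have hξ0 : ∀ k, ξ k 0 = a k := fun k => rfl
  have hξmid : ∀ k j, 1 ≤ j → j ≤ n k + 1 → ξ k j = finv (p k (j - 1)) := by
    intro k j h1 h2
    simp only [hξ, if_neg (by omega : ¬ j = 0), if_pos h2]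
  have hξend : ∀ k, ξ k (n k + 2) = b k := by
    intro k
    simp only [hξ, if_neg (by omega : ¬ n k + 2 = 0), if_neg (by omega : ¬ n k + 2 ≤ n k + 1)]
  -- gap bounds
  have hgap : ∀ k, ∀ j < n k + 2, ddist E₁ (ξ k j) (ξ k (j+1)) ≤ (M' : ℝ≥0∞) := by
    intro k j hj
    have hbound : ∀ x x' : V₁, ddist E₂ (f x) (f x') ≤ ((2 * c + 1 : ℝ≥0) : ℝ≥0∞) →
        ddist E₁ x x' ≤ (M' : ℝ≥0∞) := by
      intro x x' hxx
      refine le_trans (qi_dist_pull hγ hf x x') (le_trans ?_ (coe_le_ceil _))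
      push_cast
      gcongr
      exact_mod_cast hxx
    have hc_le : ((c : ℝ≥0) : ℝ≥0∞) ≤ ((2 * c + 1 : ℝ≥0) : ℝ≥0∞) := by
      push_cast
      calc (c : ℝ≥0∞) ≤ 2 * c := by rw [two_mul]; exact le_self_add
        _ ≤ 2 * c + 1 := le_self_add
    rcases Nat.eq_zero_or_pos j with hj0 | hjpos
    · subst hj0
      rw [hξ0, hξmid k 1 le_rfl (by omega)]
      apply hbound
      have : ddist E₂ (f (a k)) (f (finv (p k 0))) = ddist E₂ (p k 0) (f (finv (p k 0))) := by
        rw [hfa]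
      rw [this]
      exact le_trans (hc2 (p k 0)) hc_le
    · rcases Nat.lt_or_ge j (n k + 1) with hjlt | hjge
      · -- middle case
        rw [hξmid k j hjpos (by omega), hξmid k (j+1) (by omega) (by omega)]
        apply hbound
        have htri : ddist E₂ (f (finv (p k (j-1)))) (f (finv (p k j))) ≤
            ddist E₂ (f (finv (p k (j-1)))) (p k (j-1)) +
            (ddist E₂ (p k (j-1)) (p k j) + ddist E₂ (p k j) (f (finv (p k j)))) := by
          refine le_trans (ddist_triangle E₂ _ (p k (j-1)) _) ?_
          gcongr
          exact ddist_triangle E₂ _ (p k j) _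
        have hedge : ddist E₂ (p k (j-1)) (p k j) ≤ 1 := by
          have := hwp k (j-1) (by omega)
          rw [show j - 1 + 1 = j by omega] at this
          exact ddist_le_one this
        have hstep : j - 1 + 1 = j := by omega
        refine le_trans htri ?_
        calc ddist E₂ (f (finv (p k (j-1)))) (p k (j-1)) +
            (ddist E₂ (p k (j-1)) (p k j) + ddist E₂ (p k j) (f (finv (p k j))))
            ≤ (c : ℝ≥0∞) + (1 + (c : ℝ≥0∞)) := by
              gcongr
              · exact hc1 _
              · exact hc2 _
          _ = ((2 * c + 1 : ℝ≥0) : ℝ≥0∞) := by push_cast; ring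
          _ ≤ _ := le_rfl
      · -- j = n k + 1
        have hjeq : j = n k + 1 := by omega
        subst hjeq
        rw [hξmid k (n k + 1) (by omega) le_rfl, show n k + 1 + 1 = n k + 2 from rfl, hξend,
          show n k + 1 - 1 = n k by omega]
        apply hbound
        have : ddist E₂ (f (finv (p k (n k)))) (f (b k)) =
            ddist E₂ (f (finv (p k (n k)))) (p k (n k)) := by rw [hfb]
        rw [this]
        exact le_trans (hc1 (p k (n k))) hc_le
  -- glue
  choose m W hwW hW0 hWm hanchor using fun k => glue (E := E₁) (ξ k) M' (n k + 2) (hgap k)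
  apply infDisjPaths_of_family (S := fun k => W k '' Set.Iic (m k))
  · intro k
    refine isPathFromTo_walkN (hwW k) ?_ ?_
    · rw [hW0 k, hξ0]; exact ha k
    · rw [hWm k, hξend]; exact hb k
  · intro u
    rw [← Set.not_infinite]
    intro hinf
    set I := {k | u ∈ W k '' Set.Iic (m k)} with hI
    have hanch : ∀ k, k ∈ I → ∃ j, j ≤ n k + 2 ∧ ddist E₁ (ξ k j) u ≤ (M' : ℝ≥0∞) := by
      intro k hk
      obtain ⟨j, hj1, hj2⟩ := hanchor k u hk
      exact ⟨j, hj1, hj2⟩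
    choose! j hj hdj using hanch
    obtain ⟨x₀, -, hI₁⟩ := pigeon hinf (fun k => ξ k (j k))
      (fun k hk => hdj k hk) (inBall_finite hlf₁i u M')
    -- for each such k, find a vertex of F k close to f x₀
    have hvex : ∀ k, k ∈ {k | k ∈ I ∧ ξ k (j k) = x₀} →
        ∃ v, v ∈ F k ∧ ddist E₂ (f x₀) v ≤ (Nc : ℝ≥0∞) := by
      intro k hk
      have hcNc : (c : ℝ≥0∞) ≤ (Nc : ℝ≥0∞) := coe_le_ceil c
      have hjk := hj k hk.1
      rcases Nat.eq_zero_or_pos (j k) with hj0 | hjpos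
      · refine ⟨p k 0, ?_, ?_⟩
        · rw [hSeq k]; exact ⟨0, Set.mem_Iic.mpr (Nat.zero_le _), rfl⟩
        · rw [← hk.2, hj0, hξ0, hfa, ddist_self]
          exact zero_le
      · rcases Nat.lt_or_ge (j k) (n k + 2) with hjlt | hjge
        · refine ⟨p k (j k - 1), ?_, ?_⟩
          · rw [hSeq k]; exact ⟨j k - 1, Set.mem_Iic.mpr (by omega), rfl⟩
          · rw [← hk.2, hξmid k (j k) hjpos (by omega)]
            exact le_trans (hc1 _) hcNc
        · have hjeq : j k = n k + 2 := by omega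
          refine ⟨p k (n k), ?_, ?_⟩
          · rw [hSeq k]; exact ⟨n k, Set.mem_Iic.mpr le_rfl, rfl⟩
          · rw [← hk.2, hjeq, hξend, hfb, ddist_self]
            exact zero_le
    have hneV : Nonempty V₂ := ⟨p 0 0⟩
    choose! v hv hdv using hvex
    obtain ⟨v₀, -, hI₂⟩ := pigeon hI₁ v (fun k hk => hdv k hk)
      (outBall_finite hlf₂o (f x₀) Nc)
    obtain ⟨m₁, hm₁, m₂, hm₂, hne⟩ := hI₂.nontrivial
    have hx1 : v₀ ∈ F m₁ := hm₁.2 ▸ hv m₁ hm₁.1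
    have hx2 : v₀ ∈ F m₂ := hm₂.2 ▸ hv m₂ hm₂.1
    exact Set.disjoint_left.mp (hd m₁ m₂ hne) hx1 hx2

end Pull

end QIE
namespace QIE

section MC

variable {V₁ V₂ : Type*} {E₁ : V₁ → V₁ → Prop} {E₂ : V₂ → V₂ → Prop} {γ c : ℝ≥0} {f : V₁ → V₂}

/-- Main construction: the image of a ray under a quasi-isometry has a proper forward
walk passing through it cofinally, and there is a ray of `E₂` connected to it by
infinitely many disjoint paths in both directions. -/
lemma mc (hγ : 1 ≤ γ) (hf : DQI E₁ E₂ γ c f)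
    (hlf₁ : ∀ x : V₁, {y : V₁ | E₁ x y}.Finite ∧ {y : V₁ | E₁ y x}.Finite)
    (hlf₂ : ∀ x : V₂, {y : V₂ | E₂ x y}.Finite ∧ {y : V₂ | E₂ y x}.Finite)
    {r : ℕ → V₁} (hr : IsRayD E₁ r) :
    ∃ (w q : ℕ → V₂), Fwd E₂ w ∧ Proper w ∧ (f '' Set.range r) ⊆ Set.range w ∧
      IsRayD E₂ q ∧ InfDisjPaths E₂ (f '' Set.range r) (Set.range q) ∧
      InfDisjPaths E₂ (Set.range q) (f '' Set.range r) := by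
  classical
  set y : ℕ → V₂ := fun i => f (r i) with hy
  set N : ℕ := ⌈(γ + c : ℝ≥0)⌉₊ with hN
  set M : ℕ := ⌈(γ * c : ℝ≥0)⌉₊ with hM
  have hstep : ∀ i, ddist E₂ (y i) (y (i+1)) ≤ (N : ℝ≥0∞) := by
    intro i
    calc ddist E₂ (y i) (y (i+1)) ≤ γ * ddist E₁ (r i) (r (i+1)) + c := qi_dist_le hf _ _
      _ ≤ γ * 1 + c := by gcongr; exact ddist_le_one (hr.2 i)
      _ = ((γ + c : ℝ≥0) : ℝ≥0∞) := by push_cast; rw [mul_one]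
      _ ≤ (N : ℝ≥0∞) := coe_le_ceil _
  have yrep : ∀ J : Set ℕ, J.Infinite → (∀ i ∈ J, ∀ j ∈ J, y i = y j) → False := by
    intro J hJ hcst
    obtain ⟨j₀, hj₀⟩ := hJ.nonempty
    have hmem : ∀ j ∈ J, r j ∈ outBallD E₁ (r j₀) (M : ℝ≥0∞) := by
      intro j hj
      have h0 : ddist E₂ (f (r j₀)) (f (r j)) = 0 := by
        have : y j₀ = y j := hcst j₀ hj₀ j hj
        simp only [hy] at this
        rw [this, ddist_self]
      have := qi_dist_pull hγ hf (r j₀) (r j)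
      rw [h0, mul_zero, zero_add] at this
      exact le_trans this (coe_le_ceil _)
    have hfin : (r ⁻¹' outBallD E₁ (r j₀) (M : ℝ≥0∞)).Finite :=
      Set.Finite.preimage (hr.1.injOn) (outBall_finite (fun x => (hlf₁ x).1) (r j₀) M)
    exact hJ (hfin.subset hmem)
  -- choose connecting walks
  choose n hn P hW h0 hend using fun i => exists_walkN_of_ddist_le (hstep i)
  set T : ℕ → ℕ := fun i => ∑ k ∈ Finset.range i, n k with hT
  have hT0 : T 0 = 0 := rfl
  have hTsucc : ∀ i, T (i+1) = T i + n i := fun i => Finset.sum_range_succ n i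
  have hTmono : Monotone T := by
    apply monotone_nat_of_le_succ
    intro i
    rw [hTsucc]
    omega
  have hyconst : ∀ i j, i ≤ j → T i = T j → y i = y j := by
    intro i j hij
    induction hij with
    | refl => intro _; rfl
    | @step j' hj' ih =>
      intro hTeq
      have hTeq' : T i = T (j' + 1) := hTeq
      have h1 : T i ≤ T j' := hTmono hj'
      have h2 : T j' ≤ T (j' + 1) := hTmono (Nat.le_succ j')
      have h3 : T j' = T i := by omega
      have h4 : n j' = 0 := by have := hTsucc j'; omega
      clear hTeq
      have h5 : y j' = y (j' + 1) := by
        rw [← h0 j', ← hend j', h4]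
      rw [ih h3.symm, h5]
  have hTun : ∀ t, ∃ i, t < T (i+1) := by
    intro t
    by_contra hcon
    push_neg at hcon
    have hall : ∀ i, T i ≤ t := by
      intro i
      cases i with
      | zero => rw [hT0]; exact Nat.zero_le t
      | succ i => exact hcon i
    obtain ⟨s, -, hfib⟩ := pigeon (Set.infinite_univ (α := ℕ)) T
      (fun i _ => Set.mem_Iic.mpr (hall i)) (Set.finite_Iic t)
    refine yrep _ hfib ?_
    intro i hi j hj
    rcases le_total i j with h | h
    · exact hyconst i j h (hi.2.trans hj.2.symm)
    · exact (hyconst j i h (hj.2.trans hi.2.symm)).symm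
  set idx : ℕ → ℕ := fun t => Nat.find (hTun t) with hidx
  have hspec : ∀ t, t < T (idx t + 1) := fun t => Nat.find_spec (hTun t)
  have hle : ∀ t, T (idx t) ≤ t := by
    intro t
    rcases Nat.eq_zero_or_pos (idx t) with h | h
    · rw [h, hT0]; exact Nat.zero_le t
    · have hdef : idx t = Nat.find (hTun t) := rfl
      have h2 : idx t - 1 < Nat.find (hTun t) := by omega
      have h3 := Nat.find_min (hTun t) h2
      push_neg at h3
      rwa [show idx t - 1 + 1 = idx t by omega] at h3
  have huniq : ∀ t i, T i ≤ t → t < T (i+1) → idx t = i := by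
    intro t i h1 h2
    refine le_antisymm (Nat.find_min' (hTun t) h2) ?_
    by_contra hcon
    push_neg at hcon
    have : idx t + 1 ≤ i := hcon
    have := hTmono this
    have := hspec t
    omega
  have hlt : ∀ t, t - T (idx t) < n (idx t) := by
    intro t
    have h1 := hspec t
    rw [hTsucc] at h1
    have h2 := hle t
    omega
  set w : ℕ → V₂ := fun t => P (idx t) (t - T (idx t)) with hw
  have hwF : Fwd E₂ w := by
    intro t
    have hjn := hlt t
    by_cases hcase : t + 1 < T (idx t + 1)
    · have hidx1 : idx (t+1) = idx t := huniq (t+1) (idx t) (by have := hle t; omega) hcase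
      show E₂ (P (idx t) (t - T (idx t))) (P (idx (t+1)) (t + 1 - T (idx (t+1))))
      rw [hidx1, show t + 1 - T (idx t) = (t - T (idx t)) + 1 by have := hle t; omega]
      exact hW (idx t) _ hjn
    · have ht1 : t + 1 = T (idx t + 1) := by have := hspec t; omega
      have hii : idx t + 1 ≤ idx (t+1) := by
        by_contra hcon
        push_neg at hcon
        have h5 : idx (t+1) + 1 ≤ idx t + 1 := by omega
        have := hTmono h5
        have := hspec (t+1)
        omega
      have hTeq : T (idx (t+1)) = T (idx t + 1) := by
        have h6 := hle (t+1)
        have h7 := hTmono hii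
        omega
      have hsub0 : t + 1 - T (idx (t+1)) = 0 := by omega
      show E₂ (P (idx t) (t - T (idx t))) (P (idx (t+1)) (t + 1 - T (idx (t+1))))
      rw [hsub0, h0 (idx (t+1)), ← hyconst (idx t + 1) (idx (t+1)) hii hTeq.symm]
      have hni : n (idx t) = (t - T (idx t)) + 1 := by
        have := hTsucc (idx t)
        have := hle t
        omega
      rw [← hend (idx t), hni]
      exact hW (idx t) _ hjn
  have hvis : ∀ i, w (T i) = y i := by
    intro i
    have hsp := hspec (T i)
    have hl := hle (T i)
    have hii : i ≤ idx (T i) := by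
      by_contra hcon
      push_neg at hcon
      have h5 : idx (T i) + 1 ≤ i := by omega
      have := hTmono h5
      omega
    have hTeq : T i = T (idx (T i)) := le_antisymm (hTmono hii) hl
    show P (idx (T i)) (T i - T (idx (T i))) = y i
    rw [show T i - T (idx (T i)) = 0 by omega, h0]
    exact (hyconst i (idx (T i)) hii hTeq).symm
  have hYsub : f '' Set.range r ⊆ Set.range w := by
    rintro v ⟨x, ⟨i, rfl⟩, rfl⟩
    exact ⟨T i, hvis i⟩
  have hcofY : ∀ Tb, ∃ t, Tb ≤ t ∧ w t ∈ f '' Set.range r := by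
    intro Tb
    obtain ⟨i, hi⟩ := hTun Tb
    exact ⟨T (i+1), by omega, by rw [hvis (i+1)]; exact ⟨r (i+1), ⟨i+1, rfl⟩, rfl⟩⟩
  have hproper : Proper w := by
    intro v
    rw [← Set.not_infinite]
    intro hinf
    have hfib : ∀ i, {t | idx t = i}.Finite := by
      intro i
      refine (Set.finite_Ico (T i) (T (i+1))).subset ?_
      intro t ht
      simp only [Set.mem_setOf_eq] at ht
      have h1 := hle t
      have h2 := hspec t
      rw [ht] at h1 h2
      exact ⟨h1, h2⟩
    have himg : (idx '' {t | w t = v}).Infinite := by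
      by_contra hfin
      rw [Set.not_infinite] at hfin
      refine hinf ((hfin.biUnion (fun i _ => hfib i)).subset ?_)
      intro t ht
      exact Set.mem_biUnion ⟨t, ht, rfl⟩ rfl
    have hmap : ∀ i ∈ idx '' {t | w t = v}, y i ∈ inBallD E₂ v (N : ℝ≥0∞) := by
      rintro i ⟨t, ht, rfl⟩
      have hjn := hlt t
      have hval : P (idx t) (t - T (idx t)) = v := ht
      have : ddist E₂ (y (idx t)) v ≤ ((t - T (idx t) : ℕ) : ℝ≥0∞) := by
        refine ddist_le_walkN (p := fun s => P (idx t) s) (fun s hs => hW (idx t) s (by omega))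
          (h0 (idx t)) hval
      refine le_trans this ?_
      have hnn := hn (idx t)
      exact_mod_cast (by omega : t - T (idx t) ≤ N)
    obtain ⟨u, -, hfib2⟩ := pigeon himg y hmap (inBall_finite (fun x => (hlf₂ x).2) v N)
    refine yrep _ hfib2 ?_
    intro i hi j hj
    rw [hi.2, hj.2]
  obtain ⟨q, τ, hq, hτmono, hqτ⟩ := lastExit hwF hproper
  have hcofQ : ∀ Tb, ∃ t, Tb ≤ t ∧ w t ∈ Set.range q := by
    intro Tb
    exact ⟨τ Tb, hτmono.le_apply, by rw [hqτ Tb]; exact ⟨Tb, rfl⟩⟩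
  exact ⟨w, q, hwF, hproper, hYsub, hq,
    infDisj_cofinal hwF hproper hcofY hcofQ,
    infDisj_cofinal hwF hproper hcofQ hcofY⟩

end MC

end QIE
namespace QIE

variable {V : Type*}

lemma ra_inj {E : V → V → Prop} (q : RA E) : Function.Injective q.1 :=
  q.2.elim (fun h => h.1) (fun h => h.1)

lemma singleton_path {E : V → V → Prop} {A B : Set V} {v : V} (hA : v ∈ A) (hB : v ∈ B) :
    IsPathFromTo E A B {v} := by
  refine ⟨0, fun _ => v, fun i => i.elim0, hA, hB, ?_⟩
  rw [Set.range_const]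

lemma ra_self {E : V → V → Prop} (q : RA E) :
    InfDisjPaths E (Set.range q.1) (Set.range q.1) := by
  refine ⟨fun k => {q.1 k}, fun k => singleton_path ⟨k, rfl⟩ ⟨k, rfl⟩, ?_⟩
  intro k l hkl
  rw [Set.disjoint_singleton_left, Set.mem_singleton_iff]
  exact fun h => hkl (ra_inj q h)

end QIE
namespace QIE

lemma dqi_inv {V₁ V₂ : Type*} {E₁ : V₁ → V₁ → Prop} {E₂ : V₂ → V₂ → Prop} {γ c : ℝ≥0}
    {f : V₁ → V₂} (hγ : 1 ≤ γ) (hf : DQI E₁ E₂ γ c f)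
    {finv : V₂ → V₁} (hfc1 : ∀ v, ddist E₂ (f (finv v)) v ≤ c)
    (hfc2 : ∀ v, ddist E₂ v (f (finv v)) ≤ c) :
    DQI E₂ E₁ γ (3 * γ * c) finv := by
  have hG1 : 1 ≤ (γ : ℝ≥0∞) := by exact_mod_cast hγ
  have hG0 : (γ : ℝ≥0∞) ≠ 0 := by
    intro h
    rw [h] at hG1
    exact absurd hG1 (by norm_num)
  have hGt : (γ : ℝ≥0∞) ≠ ⊤ := ENNReal.coe_ne_top
  have hcast : ((3 * γ * c : ℝ≥0) : ℝ≥0∞) = 3 * (γ : ℝ≥0∞) * (c : ℝ≥0∞) := by push_cast; ring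
  have h23 : (γ : ℝ≥0∞) * c + (γ : ℝ≥0∞) * c ≤ 3 * (γ : ℝ≥0∞) * c := by
    rw [show (3 : ℝ≥0∞) * γ * c = γ * c + γ * c + γ * c by ring]
    exact le_self_add
  constructor
  · intro v v'
    constructor
    · -- lower bound
      rw [hcast, tsub_le_iff_right]
      have hup : ddist E₂ v v' ≤ (γ : ℝ≥0∞) * ddist E₁ (finv v) (finv v') + 3 * c := by
        calc ddist E₂ v v' ≤ ddist E₂ v (f (finv v)) + ddist E₂ (f (finv v)) v' :=
              ddist_triangle _ _ _ _
          _ ≤ ddist E₂ v (f (finv v)) +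
              (ddist E₂ (f (finv v)) (f (finv v')) + ddist E₂ (f (finv v')) v') := by
              gcongr
              exact ddist_triangle _ _ _ _
          _ ≤ (c : ℝ≥0∞) + (((γ : ℝ≥0∞) * ddist E₁ (finv v) (finv v') + c) + c) := by
              gcongr
              · exact hfc2 v
              · exact qi_dist_le hf _ _
              · exact hfc1 v'
          _ = (γ : ℝ≥0∞) * ddist E₁ (finv v) (finv v') + 3 * c := by ring
      calc (γ : ℝ≥0∞)⁻¹ * ddist E₂ v v'
          ≤ (γ : ℝ≥0∞)⁻¹ * ((γ : ℝ≥0∞) * ddist E₁ (finv v) (finv v') + 3 * c) :=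
            mul_le_mul_right hup _
        _ = ((γ : ℝ≥0∞)⁻¹ * γ) * ddist E₁ (finv v) (finv v') + (γ : ℝ≥0∞)⁻¹ * (3 * c) := by ring
        _ = ddist E₁ (finv v) (finv v') + (γ : ℝ≥0∞)⁻¹ * (3 * c) := by
            rw [ENNReal.inv_mul_cancel hG0 hGt, one_mul]
        _ ≤ ddist E₁ (finv v) (finv v') + 3 * γ * c := by
            refine add_le_add_right ?_ _
            calc (γ : ℝ≥0∞)⁻¹ * (3 * c) ≤ 1 * (3 * c) :=
                  mul_le_mul_left (ENNReal.inv_le_one.mpr hG1) _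
              _ = 3 * c := one_mul _
              _ ≤ 3 * γ * c := by
                  rw [show (3 : ℝ≥0∞) * γ * c = γ * (3 * c) by ring]
                  exact le_mul_of_one_le_left zero_le hG1
    · -- upper bound
      rw [hcast]
      have hmid : ddist E₂ (f (finv v)) (f (finv v')) ≤ (c : ℝ≥0∞) + (ddist E₂ v v' + c) := by
        calc ddist E₂ (f (finv v)) (f (finv v'))
            ≤ ddist E₂ (f (finv v)) v + ddist E₂ v (f (finv v')) := ddist_triangle _ _ _ _
          _ ≤ ddist E₂ (f (finv v)) v + (ddist E₂ v v' + ddist E₂ v' (f (finv v'))) := by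
              gcongr
              exact ddist_triangle _ _ _ _
          _ ≤ (c : ℝ≥0∞) + (ddist E₂ v v' + c) := by
              gcongr
              · exact hfc1 v
              · exact hfc2 v'
      calc ddist E₁ (finv v) (finv v')
          ≤ (γ : ℝ≥0∞) * ddist E₂ (f (finv v)) (f (finv v')) + γ * c := qi_dist_pull hγ hf _ _
        _ ≤ (γ : ℝ≥0∞) * ((c : ℝ≥0∞) + (ddist E₂ v v' + c)) + γ * c :=
            add_le_add_left (mul_le_mul_right hmid _) _
        _ = (γ : ℝ≥0∞) * ddist E₂ v v' + 3 * γ * c := by ring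
  · intro x
    refine ⟨f x, ?_, ?_⟩
    · rw [hcast]
      have h1 : ddist E₂ (f (finv (f x))) (f x) ≤ c := hfc1 (f x)
      calc ddist E₁ (finv (f x)) x
          ≤ (γ : ℝ≥0∞) * ddist E₂ (f (finv (f x))) (f x) + γ * c := qi_dist_pull hγ hf _ _
        _ ≤ (γ : ℝ≥0∞) * c + γ * c := add_le_add_left (mul_le_mul_right h1 _) _
        _ ≤ 3 * (γ : ℝ≥0∞) * c := h23
    · rw [hcast]
      have h1 : ddist E₂ (f x) (f (finv (f x))) ≤ c := hfc2 (f x)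
      calc ddist E₁ x (finv (f x))
          ≤ (γ : ℝ≥0∞) * ddist E₂ (f x) (f (finv (f x))) + γ * c := qi_dist_pull hγ hf _ _
        _ ≤ (γ : ℝ≥0∞) * c + γ * c := add_le_add_left (mul_le_mul_right h1 _) _
        _ ≤ 3 * (γ : ℝ≥0∞) * c := h23

end QIE
/-- A quasi-isometry between locally finite digraphs canonically induces a
bijection between their sets of ends preserving the order `≼`. -/
theorem stmt_13 {V₁ V₂ : Type*} (E₁ : V₁ → V₁ → Prop) (E₂ : V₂ → V₂ → Prop)
    (hlf₁ : ∀ x : V₁, {y : V₁ | E₁ x y}.Finite ∧ {y : V₁ | E₁ y x}.Finite)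
    (hlf₂ : ∀ x : V₂, {y : V₂ | E₂ x y}.Finite ∧ {y : V₂ | E₂ y x}.Finite)
    (γ c : ℝ≥0) (hγ : 1 ≤ γ) (f : V₁ → V₂) (hf : DQI E₁ E₂ γ c f) :
    ∃ Φ : Ends E₁ → Ends E₂, Function.Bijective Φ ∧
      (∀ a b : Ends E₁, endle E₁ a b ↔ endle E₂ (Φ a) (Φ b)) ∧
      -- `Φ` is canonically defined by `f`: it maps the end of `r` to the end of any
      -- ray or anti-ray `q` of `E₂` with infinitely many disjoint directed paths
      -- between `q` and the `f`-image of `r` in both directions.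
      (∀ (r : RA E₁) (q : RA E₂),
        InfDisjPaths E₂ (f '' Set.range r.1) (Set.range q.1) →
        InfDisjPaths E₂ (Set.range q.1) (f '' Set.range r.1) →
        Φ (Quot.mk (endrel E₁) r) = Quot.mk (endrel E₂) q) := by
  classical
  have hlf₁o : ∀ x : V₁, {y : V₁ | E₁ x y}.Finite := fun x => (hlf₁ x).1
  have hlf₁i : ∀ x : V₁, {y : V₁ | E₁ y x}.Finite := fun x => (hlf₁ x).2
  have hlf₂o : ∀ x : V₂, {y : V₂ | E₂ x y}.Finite := fun x => (hlf₂ x).1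
  have hlf₂i : ∀ x : V₂, {y : V₂ | E₂ y x}.Finite := fun x => (hlf₂ x).2
  have hlf₁' : ∀ x : V₁, {y : V₁ | QIE.flipE E₁ x y}.Finite ∧ {y : V₁ | QIE.flipE E₁ y x}.Finite :=
    fun x => ⟨hlf₁i x, hlf₁o x⟩
  have hlf₂' : ∀ x : V₂, {y : V₂ | QIE.flipE E₂ x y}.Finite ∧ {y : V₂ | QIE.flipE E₂ y x}.Finite :=
    fun x => ⟨hlf₂i x, hlf₂o x⟩
  have hmidY : ∀ r : RA E₁, QIE.MidSet E₂ (f '' Set.range r.1) := by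
    intro r
    rcases r.2 with hray | hanti
    · obtain ⟨w, q, hwF, hp, hsub, -, -, -⟩ := QIE.mc hγ hf hlf₁ hlf₂ hray
      exact Or.inl ⟨w, hwF, hp, hsub⟩
    · obtain ⟨w, q, hwF, hp, hsub, -, -, -⟩ :=
        QIE.mc hγ (QIE.dqi_flip hf) hlf₁' hlf₂' (show IsRayD (QIE.flipE E₁) r.1 from hanti)
      exact Or.inr ⟨w, hwF, hp, hsub⟩
  have hkey : ∀ r : RA E₁, ∃ q : RA E₂,
      InfDisjPaths E₂ (f '' Set.range r.1) (Set.range q.1) ∧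
      InfDisjPaths E₂ (Set.range q.1) (f '' Set.range r.1) := by
    intro r
    rcases r.2 with hray | hanti
    · obtain ⟨w, q, -, -, -, hq, h1, h2⟩ := QIE.mc hγ hf hlf₁ hlf₂ hray
      exact ⟨⟨q, Or.inl hq⟩, h1, h2⟩
    · obtain ⟨w, q, -, -, -, hq, h1, h2⟩ :=
        QIE.mc hγ (QIE.dqi_flip hf) hlf₁' hlf₂' (show IsRayD (QIE.flipE E₁) r.1 from hanti)
      exact ⟨⟨q, Or.inr hq⟩, QIE.infDisjPaths_flip.mp h2, QIE.infDisjPaths_flip.mp h1⟩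
  choose g hg1 hg2 using hkey
  have chainQ : ∀ (q : RA E₂) (A C : Set V₂), InfDisjPaths E₂ A (Set.range q.1) →
      InfDisjPaths E₂ (Set.range q.1) C → InfDisjPaths E₂ A C :=
    fun q A C h1 h2 => QIE.chain (QIE.midSet_RA q) h1 h2
  have chainR : ∀ (s : RA E₁) (A C : Set V₁), InfDisjPaths E₁ A (Set.range s.1) →
      InfDisjPaths E₁ (Set.range s.1) C → InfDisjPaths E₁ A C :=
    fun s A C h1 h2 => QIE.chain (QIE.midSet_RA s) h1 h2
  have chainY : ∀ (r : RA E₁) (A C : Set V₂), InfDisjPaths E₂ A (f '' Set.range r.1) →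
      InfDisjPaths E₂ (f '' Set.range r.1) C → InfDisjPaths E₂ A C :=
    fun r A C h1 h2 => QIE.chain (hmidY r) h1 h2
  have heq2 : Equivalence (endrel E₂) :=
    ⟨fun q => ⟨QIE.ra_self q, QIE.ra_self q⟩, fun h => ⟨h.2, h.1⟩,
      fun {a b c'} h1 h2 => ⟨chainQ b _ _ h1.1 h2.1, chainQ b _ _ h2.2 h1.2⟩⟩
  have hmk2 : ∀ s t : RA E₂, Quot.mk (endrel E₂) s = Quot.mk (endrel E₂) t → endrel E₂ s t :=
    fun s t h => (heq2.eqvGen_iff).mp (Quot.eq.mp h)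
  have hwell : ∀ r r' : RA E₁, endrel E₁ r r' → endrel E₂ (g r) (g r') := by
    intro r r' h
    have hp1 := QIE.push hγ hf hlf₁o hlf₂i h.1
    have hp2 := QIE.push hγ hf hlf₁o hlf₂i h.2
    exact ⟨chainY r' _ _ (chainY r _ _ (hg2 r) hp1) (hg1 r'),
      chainY r _ _ (chainY r' _ _ (hg2 r') hp2) (hg1 r)⟩
  -- pull-back of relations between images of `g`
  have hpb : ∀ s s' : RA E₁, InfDisjPaths E₂ (Set.range (g s).1) (Set.range (g s').1) →
      InfDisjPaths E₁ (Set.range s.1) (Set.range s'.1) := by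
    intro s s' h
    refine QIE.pull hγ hf hlf₁i hlf₂o ?_
    exact chainQ (g s') _ _ (chainQ (g s) _ _ (hg1 s) h) (hg2 s')
  -- quasi-inverse machinery for surjectivity
  choose finv hfc1 hfc2 using hf.2
  have hf' : DQI E₂ E₁ γ (3 * γ * c) finv := QIE.dqi_inv hγ hf hfc1 hfc2
  have hkey' : ∀ s : RA E₂, ∃ q : RA E₁,
      InfDisjPaths E₁ (finv '' Set.range s.1) (Set.range q.1) ∧
      InfDisjPaths E₁ (Set.range q.1) (finv '' Set.range s.1) := by
    intro s
    rcases s.2 with hray | hanti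
    · obtain ⟨w, q, -, -, -, hq, h1, h2⟩ := QIE.mc hγ hf' hlf₂ hlf₁ hray
      exact ⟨⟨q, Or.inl hq⟩, h1, h2⟩
    · obtain ⟨w, q, -, -, -, hq, h1, h2⟩ :=
        QIE.mc hγ (QIE.dqi_flip hf') hlf₂' hlf₁' (show IsRayD (QIE.flipE E₂) s.1 from hanti)
      exact ⟨⟨q, Or.inr hq⟩, QIE.infDisjPaths_flip.mp h2, QIE.infDisjPaths_flip.mp h1⟩
  choose g' hg1' hg2' using hkey'
  set K₂ : ℕ := ⌈(2 * γ * c : ℝ≥0)⌉₊ with hK₂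
  have hshb1 : ∀ x : V₁, ddist E₁ (finv (f x)) x ≤ (K₂ : ℝ≥0∞) := by
    intro x
    calc ddist E₁ (finv (f x)) x
        ≤ γ * ddist E₂ (f (finv (f x))) (f x) + γ * c := QIE.qi_dist_pull hγ hf _ _
      _ ≤ γ * c + γ * c := add_le_add_left (mul_le_mul_right (hfc1 (f x)) _) _
      _ = ((2 * γ * c : ℝ≥0) : ℝ≥0∞) := by push_cast; ring
      _ ≤ _ := QIE.coe_le_ceil _
  have hshb2 : ∀ x : V₁, ddist E₁ x (finv (f x)) ≤ (K₂ : ℝ≥0∞) := by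
    intro x
    calc ddist E₁ x (finv (f x))
        ≤ γ * ddist E₂ (f x) (f (finv (f x))) + γ * c := QIE.qi_dist_pull hγ hf _ _
      _ ≤ γ * c + γ * c := add_le_add_left (mul_le_mul_right (hfc2 (f x)) _) _
      _ = ((2 * γ * c : ℝ≥0) : ℝ≥0∞) := by push_cast; ring
      _ ≤ _ := QIE.coe_le_ceil _
  have hsh1 : ∀ s : RA E₂,
      InfDisjPaths E₁ (finv '' (f '' Set.range (g' s).1)) (Set.range (g' s).1) := by
    intro s
    exact QIE.shadow hlf₁o (fun m => finv (f ((g' s).1 m))) (fun m => (g' s).1 m) K₂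
      (fun m => Set.mem_image_of_mem finv (Set.mem_image_of_mem f ⟨m, rfl⟩))
      (fun m => ⟨m, rfl⟩) (fun m => hshb1 _) (QIE.ra_inj (g' s))
  have hsh2 : ∀ s : RA E₂,
      InfDisjPaths E₁ (Set.range (g' s).1) (finv '' (f '' Set.range (g' s).1)) := by
    intro s
    rw [← QIE.infDisjPaths_flip (E := E₁)]
    exact QIE.shadow (E := QIE.flipE E₁) hlf₁i (fun m => finv (f ((g' s).1 m)))
      (fun m => (g' s).1 m) K₂
      (fun m => Set.mem_image_of_mem finv (Set.mem_image_of_mem f ⟨m, rfl⟩))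
      (fun m => ⟨m, rfl⟩)
      (fun m => by rw [QIE.ddist_flip]; exact hshb2 _) (QIE.ra_inj (g' s))
  have hb1 : ∀ s : RA E₂, InfDisjPaths E₂ (f '' Set.range (g' s).1) (Set.range s.1) := by
    intro s
    refine QIE.pull hγ hf' hlf₂i hlf₁o ?_
    exact chainR (g' s) _ _ (hsh1 s) (hg2' s)
  have hb2 : ∀ s : RA E₂, InfDisjPaths E₂ (Set.range s.1) (f '' Set.range (g' s).1) := by
    intro s
    refine QIE.pull hγ hf' hlf₂i hlf₁o ?_
    exact chainR (g' s) _ _ (hg1' s) (hsh2 s)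
  refine ⟨Quot.lift (fun r => Quot.mk (endrel E₂) (g r))
      (fun r r' h => Quot.sound (hwell r r' h)), ⟨?_, ?_⟩, ?_, ?_⟩
  · -- injective
    intro a b hab
    obtain ⟨r, rfl⟩ := Quot.exists_rep a
    obtain ⟨r', rfl⟩ := Quot.exists_rep b
    have h2 : endrel E₂ (g r) (g r') := hmk2 _ _ hab
    exact Quot.sound ⟨hpb r r' h2.1, hpb r' r h2.2⟩
  · -- surjective
    intro bE
    obtain ⟨s, rfl⟩ := Quot.exists_rep bE
    refine ⟨Quot.mk (endrel E₁) (g' s), ?_⟩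
    show Quot.mk (endrel E₂) (g (g' s)) = Quot.mk (endrel E₂) s
    refine Quot.sound ⟨?_, ?_⟩
    · exact chainY (g' s) _ _ (hg2 (g' s)) (hb1 s)
    · exact chainY (g' s) _ _ (hb2 s) (hg1 (g' s))
  · -- order preserving
    intro a b
    constructor
    · rintro ⟨r, r'', hra, hrb, hAB⟩
      refine ⟨g r, g r'', ?_, ?_, ?_⟩
      · rw [← hra]
      · rw [← hrb]
      · have hp := QIE.push hγ hf hlf₁o hlf₂i hAB
        exact chainY r'' _ _ (chainY r _ _ (hg2 r) hp) (hg1 r'')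
    · rintro ⟨s, t, hsa, htb, hst⟩
      obtain ⟨r, rfl⟩ := Quot.exists_rep a
      obtain ⟨r', rfl⟩ := Quot.exists_rep b
      have hs : endrel E₂ s (g r) := hmk2 _ _ hsa
      have ht : endrel E₂ t (g r') := hmk2 _ _ htb
      have u1 := chainQ (g r) _ _ (hg1 r) hs.2
      have u2 := chainQ s _ _ u1 hst
      have u3 := chainQ t _ _ u2 ht.1
      have u4 := chainQ (g r') _ _ u3 (hg2 r')
      exact ⟨r, r', rfl, rfl, QIE.pull hγ hf hlf₁i hlf₂o u4⟩
  · -- canonically defined by f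
    intro r q h1 h2
    show Quot.mk (endrel E₂) (g r) = Quot.mk (endrel E₂) q
    exact Quot.sound ⟨chainY r _ _ (hg2 r) h1, chainY r _ _ h2 (hg1 r)⟩
end

section
/- Let ρ : Y × Y → [0,∞) satisfy ρ(y,y) = 0 and ρ(a,b) ≤ K·max{ρ(a,c), ρ(c,b)} for all a,b,c ∈ Y, where 1 ≤ K < √2. Then for every finite chain y₀, y₁, ..., y_n in Y we have (3−2K)·ρ(y₀,y_n) ≤ Σ_{i=0}^{n−1} ρ(y_i, y_{i+1}). -/
theorem stmt_16_aux {Y : Type*} (ρ : Y → Y → ℝ) (K : ℝ)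
    (hnn : ∀ a b : Y, 0 ≤ ρ a b) (hdiag : ∀ y : Y, ρ y y = 0)
    (hq : ∀ a b c : Y, ρ a b ≤ K * max (ρ a c) (ρ c b))
    (hK1 : 1 ≤ K) (hK2 : K < Real.sqrt 2) :
    ∀ (n : ℕ) (y : ℕ → Y),
      (3 - 2 * K) * ρ (y 0) (y n) ≤ ∑ i ∈ Finset.range n, ρ (y i) (y (i+1)) := by
  classical
  have hK0 : (0:ℝ) < K := lt_of_lt_of_le one_pos hK1
  have hsq : Real.sqrt 2 ^ 2 = 2 := Real.sq_sqrt (by norm_num)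
  have hKsq : K ^ 2 < 2 := by nlinarith [Real.sqrt_nonneg 2]
  have hK2' : K ≤ 2 := by nlinarith
  have hc : 0 < 3 - 2 * K := by nlinarith
  have hcK2 : (3 - 2 * K) * K ^ 2 ≤ 1 := by nlinarith [sq_nonneg (K - 1)]
  have hcK : (0:ℝ) ≤ (3 - 2 * K) * K := mul_nonneg hc.le hK0.le
  have hcKK : (0:ℝ) ≤ (3 - 2 * K) * K ^ 2 := mul_nonneg hc.le (sq_nonneg K)
  intro n
  induction n using Nat.strong_induction_on with
  | _ n ih =>
    intro y
    rcases Nat.eq_zero_or_pos n with rfl | hn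
    · simp [hdiag]
    set S := ∑ i ∈ Finset.range n, ρ (y i) (y (i+1)) with hS
    have hS0 : 0 ≤ S := Finset.sum_nonneg fun i _ => hnn _ _
    set P : ℕ → Prop := fun m => (∑ i ∈ Finset.range m, ρ (y i) (y (i+1))) ≤ S / 2 with hP
    have hP0 : P 0 := by simp [hP]; linarith
    set m := Nat.findGreatest P (n-1) with hm
    have hmle : m ≤ n - 1 := Nat.findGreatest_le (P := P) (n-1)
    have hmn : m < n := by omega
    have hPm : P m := Nat.findGreatest_spec (Nat.zero_le _) hP0
    -- tail bound
    have htail : (∑ i ∈ Finset.Ico (m+1) n, ρ (y i) (y (i+1))) ≤ S / 2 := by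
      rcases eq_or_lt_of_le hmle with heq | hlt
      · have h' : m + 1 = n := by omega
        rw [h', Finset.Ico_self, Finset.sum_empty]; linarith
      · have hnot : ¬ P (m+1) := Nat.findGreatest_is_greatest (n := n-1) (by omega) (by omega)
        have hgt : S / 2 < ∑ i ∈ Finset.range (m+1), ρ (y i) (y (i+1)) := by
          simpa [hP, not_le] using hnot
        have hsplit : (∑ i ∈ Finset.range (m+1), ρ (y i) (y (i+1)))
            + ∑ i ∈ Finset.Ico (m+1) n, ρ (y i) (y (i+1)) = S := by
          rw [hS]; exact Finset.sum_range_add_sum_Ico _ (by omega)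
        linarith
    have hBm : ρ (y m) (y (m+1)) ≤ S := by
      rw [hS]
      exact Finset.single_le_sum (f := fun i => ρ (y i) (y (i+1)))
        (fun i _ => hnn _ _) (Finset.mem_range.mpr hmn)
    -- induction hypotheses
    have h1 : (3 - 2 * K) * ρ (y 0) (y m) ≤ S / 2 :=
      le_trans (ih m hmn y) hPm
    have h2 : (3 - 2 * K) * ρ (y (m+1)) (y n) ≤ S / 2 := by
      have hthis := ih (n - (m+1)) (by omega) (fun i => y (m+1+i))
      simp only [Nat.add_zero] at hthis
      have hsum : (∑ i ∈ Finset.range (n-(m+1)), ρ (y (m+1+i)) (y (m+1+(i+1))))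
          = ∑ i ∈ Finset.Ico (m+1) n, ρ (y i) (y (i+1)) := by
        rw [Finset.sum_Ico_eq_sum_range]
        exact Finset.sum_congr rfl fun i _ => by
          have h' : m + 1 + (i + 1) = m + 1 + i + 1 := by omega
          rw [h']
      rw [hsum] at hthis
      have hend : m + 1 + (n - (m+1)) = n := by omega
      rw [hend] at hthis
      exact le_trans hthis htail
    have q1 : ρ (y 0) (y n) ≤ K * max (ρ (y 0) (y m)) (ρ (y m) (y n)) := hq _ _ _
    have q2 : ρ (y m) (y n) ≤ K * max (ρ (y m) (y (m+1))) (ρ (y (m+1)) (y n)) := hq _ _ _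
    have hnn1 := hnn (y 0) (y m)
    have hnn2 := hnn (y (m+1)) (y n)
    have hnn3 := hnn (y m) (y (m+1))
    have hnn4 := hnn (y 0) (y n)
    have hnn5 := hnn (y m) (y n)
    rcases max_cases (ρ (y 0) (y m)) (ρ (y m) (y n)) with ⟨e1, _⟩ | ⟨e1, _⟩ <;>
      rw [e1] at q1
    · -- ρ0n ≤ K * ρ0m
      linarith [mul_le_mul_of_nonneg_left q1 hc.le,
        mul_le_mul_of_nonneg_left h1 hK0.le,
        mul_nonneg (by linarith : (0:ℝ) ≤ 2 - K) hS0]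
    · rcases max_cases (ρ (y m) (y (m+1))) (ρ (y (m+1)) (y n)) with ⟨e2, _⟩ | ⟨e2, _⟩ <;>
        rw [e2] at q2
      · -- ρ0n ≤ K * ρmn, ρmn ≤ K * B, B ≤ S
        linarith [mul_le_mul_of_nonneg_left q1 hc.le,
          mul_le_mul_of_nonneg_left q2 hcK,
          mul_le_mul_of_nonneg_left hBm hcKK,
          mul_le_mul_of_nonneg_right hcK2 hS0]
      · -- ρ0n ≤ K * ρmn, ρmn ≤ K * r1n, c * r1n ≤ S/2
        linarith [mul_le_mul_of_nonneg_left q1 hc.le,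
          mul_le_mul_of_nonneg_left q2 hcK,
          mul_le_mul_of_nonneg_left h2 (sq_nonneg K),
          mul_nonneg (by linarith : (0:ℝ) ≤ 2 - K^2) hS0]

/-- If `ρ : Y × Y → [0,∞)` vanishes on the diagonal and satisfies the
`K`-quasi-ultrametric inequality `ρ(a,b) ≤ K·max(ρ(a,c), ρ(c,b))` with
`1 ≤ K < √2`, then every finite chain `y₀, …, y_n` satisfies
`(3−2K)·ρ(y₀,y_n) ≤ Σ ρ(y_i, y_{i+1})`. -/
theorem stmt_16 {Y : Type*} (ρ : Y → Y → ℝ) (K : ℝ)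
    (hnn : ∀ a b : Y, 0 ≤ ρ a b) (hdiag : ∀ y : Y, ρ y y = 0)
    (hq : ∀ a b c : Y, ρ a b ≤ K * max (ρ a c) (ρ c b))
    (hK1 : 1 ≤ K) (hK2 : K < Real.sqrt 2) :
    ∀ (n : ℕ) (y : Fin (n+1) → Y),
      (3 - 2 * K) * ρ (y 0) (y (Fin.last n)) ≤
        ∑ i : Fin n, ρ (y i.castSucc) (y i.succ) := by
  intro n y
  set z : ℕ → Y := fun j => y ⟨min j n, by omega⟩ with hz
  have key := stmt_16_aux ρ K hnn hdiag hq hK1 hK2 n z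
  have h0 : z 0 = y 0 := by
    simp only [hz]
    congr 1
  have hn' : z n = y (Fin.last n) := by
    simp only [hz]
    congr 1
    exact Fin.ext (by simp only [Fin.val_last]; omega)
  rw [h0, hn'] at key
  refine le_trans key (le_of_eq ?_)
  rw [← Fin.sum_univ_eq_sum_range (fun j => ρ (z j) (z (j+1))) n]
  refine Finset.sum_congr rfl fun i _ => ?_
  have hi : (i : ℕ) < n := i.isLt
  have e1 : z ↑i = y i.castSucc := by
    simp only [hz]
    congr 1
    exact Fin.ext (by simp only [Fin.coe_castSucc]; omega)
  have e2 : z (↑i + 1) = y i.succ := by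
    simp only [hz]
    congr 1
    exact Fin.ext (by simp only [Fin.val_succ]; omega)
  rw [e1, e2]
end

section
/- Let D be a hyperbolic digraph satisfying (B1) and (B2) in which every vertex has finite out-degree. Then the geodesic f-boundary of D refines the f-ends of D: for every ray R in D there exists a geodesic ray Q (starting at the starting vertex of R) such that R and Q lie in the same f-end, i.e., there are infinitely many pairwise disjoint directed R-Q paths and infinitely many pairwise disjoint directed Q-R paths. -/
open Set
open scoped ENNReal NNReal

section Digraph

variable {V : Type*}

def IsGeoWalk (E : V → V → Prop) (n : ℕ) (p : Fin (n+1) → V) : Prop :=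
  IsWalk E n p ∧ (n : ℝ≥0∞) = ddist E (p 0) (p (Fin.last n))

def JoinsW {n : ℕ} (p : Fin (n+1) → V) (x y : V) : Prop :=
  (p 0 = x ∧ p (Fin.last n) = y) ∨ (p 0 = y ∧ p (Fin.last n) = x)

def outBallSetD (E : V → V → Prop) (A : Set V) (δ : ℝ≥0∞) : Set V :=
  {y | ∃ a ∈ A, ddist E a y ≤ δ}

def inBallSetD (E : V → V → Prop) (A : Set V) (δ : ℝ≥0∞) : Set V :=
  {y | ∃ a ∈ A, ddist E y a ≤ δ}

/-- `δ`-hyperbolicity of a digraph: all geodesic triangles are `δ`-thin. -/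
def DHyper (E : V → V → Prop) (δ : ℝ≥0∞) : Prop :=
  ∀ (c : V) (nP nQ nR : ℕ) (P : Fin (nP+1) → V) (Q : Fin (nQ+1) → V) (R : Fin (nR+1) → V),
    IsGeoWalk E nP P → IsGeoWalk E nQ Q → IsGeoWalk E nR R →
    JoinsW Q (P 0) c → JoinsW R (P (Fin.last nP)) c →
    Set.range P ⊆ outBallSetD E (Set.range Q) δ ∪ inBallSetD E (Set.range R) δ

def DB1 (E : V → V → Prop) (f : ℝ≥0 → ℝ≥0) : Prop :=
  ∀ (x y z : V) (r : ℝ≥0), ddist E x y ≤ r → ddist E x z ≤ r →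
    ddist E y z ≠ ⊤ → ddist E y z ≤ f r

def DB2 (E : V → V → Prop) (f : ℝ≥0 → ℝ≥0) : Prop :=
  ∀ (x y z : V) (r : ℝ≥0), ddist E y x ≤ r → ddist E z x ≤ r →
    ddist E y z ≠ ⊤ → ddist E y z ≤ f r

def IsGeoRayD (E : V → V → Prop) (r : ℕ → V) : Prop :=
  IsRayD E r ∧ ∀ i j : ℕ, i ≤ j → ddist E (r i) (r j) = ((j - i : ℕ) : ℝ≥0∞)

def IsQGRayD (E : V → V → Prop) (γ c : ℝ≥0) (r : ℕ → V) : Prop :=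
  IsRayD E r ∧ ∀ i j : ℕ, i ≤ j → ((j - i : ℕ) : ℝ≥0∞) ≤ γ * ddist E (r i) (r j) + c

def IsQGAntiRayD (E : V → V → Prop) (γ c : ℝ≥0) (r : ℕ → V) : Prop :=
  IsAntiRayD E r ∧ ∀ i j : ℕ, i ≤ j → ((j - i : ℕ) : ℝ≥0∞) ≤ γ * ddist E (r j) (r i) + c

/-- The relation `≤` on (images of) rays and anti-rays: directed `A`-`B` paths of
uniformly bounded length avoiding every out- and in-ball of finite radius. -/
def drleq (E : V → V → Prop) (A B : Set V) : Prop :=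
  ∃ M : ℕ, ∀ (x : V) (ρ : ℝ≥0), ∃ (n : ℕ) (p : Fin (n+1) → V),
    n ≤ M ∧ IsWalk E n p ∧ p 0 ∈ A ∧ p (Fin.last n) ∈ B ∧
    ∀ i, p i ∉ outBallD E x ρ ∪ inBallD E x ρ

/-- Quasi-geodesic rays and anti-rays of a digraph. -/
def QRayD (E : V → V → Prop) :=
  {r : ℕ → V // ∃ γ c : ℝ≥0, IsQGRayD E γ c r ∨ IsQGAntiRayD E γ c r}

def drel (E : V → V → Prop) : QRayD E → QRayD E → Prop := fun r q =>
  drleq E (Set.range r.1) (Set.range q.1) ∧ drleq E (Set.range q.1) (Set.range r.1)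

/-- The quasi-geodesic boundary of a digraph. -/
def DBoundary (E : V → V → Prop) := Quot (drel E)

end Digraph
section ChainLayer

variable {V : Type*} {E : V → V → Prop}

/-- An ℕ-indexed walk of length `L` starting at index 0. -/
def MyChain (E : V → V → Prop) (s : ℕ → V) (L : ℕ) : Prop :=
  ∀ i, i < L → E (s i) (s (i+1))

lemma mychain_mono {s : ℕ → V} {L L' : ℕ} (h : MyChain E s L) (hL : L' ≤ L) :
    MyChain E s L' := fun i hi => h i (lt_of_lt_of_le hi hL)

lemma mychain_shift {s : ℕ → V} {L : ℕ} (h : MyChain E s L) (a b : ℕ) (hb : b ≤ L) :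
    MyChain E (fun i => s (a + i)) (b - a) := by
  intro i hi
  have h1 : a + (i+1) = (a+i)+1 := by omega
  show E (s (a+i)) (s (a+(i+1)))
  rw [h1]
  exact h (a+i) (by omega)

lemma isWalk_of_chain {s : ℕ → V} {L : ℕ} (h : MyChain E s L) :
    IsWalk E L (fun i : Fin (L+1) => s i) := by
  intro i
  simpa using h i i.2

lemma ddist_le_of_chain {s : ℕ → V} {L : ℕ} {x y : V} (h : MyChain E s L)
    (h0 : s 0 = x) (hL : s L = y) : ddist E x y ≤ (L:ℝ≥0∞) := by
  apply sInf_le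
  exact ⟨L, fun i : Fin (L+1) => s i, isWalk_of_chain h, by simpa using h0,
    by simpa using hL, rfl⟩

lemma chain_of_walk {n : ℕ} {p : Fin (n+1) → V} (h : IsWalk E n p) :
    ∃ s : ℕ → V, MyChain E s n ∧ s 0 = p 0 ∧ s n = p (Fin.last n) := by
  refine ⟨fun i => p ⟨min i n, by omega⟩, ?_, ?_, ?_⟩
  · intro i hi
    have := h ⟨i, hi⟩
    convert this using 2
    · apply Fin.ext; simp [Nat.min_eq_left (by omega : i ≤ n)]
    · apply Fin.ext; simp [Nat.min_eq_left (by omega : i + 1 ≤ n)]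
  · exact congrArg p (by apply Fin.ext; simp)
  · exact congrArg p (by apply Fin.ext; simp [Fin.last])

lemma ddist_spec (E : V → V → Prop) (x y : V) :
    (ddist E x y = ⊤) ∨
    ∃ (L : ℕ) (s : ℕ → V), MyChain E s L ∧ s 0 = x ∧ s L = y ∧
      ddist E x y = (L:ℝ≥0∞) := by
  classical
  by_cases hS : {L : ℕ | ∃ s : ℕ → V, MyChain E s L ∧ s 0 = x ∧ s L = y}.Nonempty
  · right
    set S := {L : ℕ | ∃ s : ℕ → V, MyChain E s L ∧ s 0 = x ∧ s L = y} with hSdef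
    obtain ⟨s, hs⟩ := Nat.sInf_mem hS
    refine ⟨sInf S, s, hs.1, hs.2.1, hs.2.2, le_antisymm (ddist_le_of_chain hs.1 hs.2.1 hs.2.2) ?_⟩
    refine le_sInf fun m hm => ?_
    obtain ⟨n, p, hw, h0, hL, rfl⟩ := hm
    obtain ⟨s', hc, h0', hL'⟩ := chain_of_walk hw
    exact Nat.cast_le.2 (Nat.sInf_le ⟨s', hc, h0'.trans h0, hL'.trans hL⟩)
  · left
    have he : {m : ℝ≥0∞ | ∃ (n : ℕ) (p : Fin (n+1) → V),
        IsWalk E n p ∧ p 0 = x ∧ p (Fin.last n) = y ∧ m = n} = ∅ := by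
      ext m
      simp only [Set.mem_setOf_eq, Set.mem_empty_iff_false, iff_false]
      rintro ⟨n, p, hw, h0, hL, rfl⟩
      obtain ⟨s', hc, h0', hL'⟩ := chain_of_walk hw
      exact hS ⟨n, s', hc, h0'.trans h0, hL'.trans hL⟩
    rw [ddist, he, sInf_empty]

lemma exists_geochain {x y : V} (h : ddist E x y ≠ ⊤) :
    ∃ (L : ℕ) (s : ℕ → V), MyChain E s L ∧ s 0 = x ∧ s L = y ∧
      ddist E x y = (L:ℝ≥0∞) := (ddist_spec E x y).resolve_left h

lemma exists_nat_of_ne_top {x y : V} (h : ddist E x y ≠ ⊤) :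
    ∃ k : ℕ, ddist E x y = (k:ℝ≥0∞) := by
  obtain ⟨L, s, -, -, -, hd⟩ := exists_geochain h; exact ⟨L, hd⟩

lemma ddist_ne_top_of_le_nat {x y : V} {k : ℕ} (h : ddist E x y ≤ (k:ℝ≥0∞)) :
    ddist E x y ≠ ⊤ :=
  ne_top_of_le_ne_top (ENNReal.natCast_ne_top k) h

lemma ddist_self (E : V → V → Prop) (x : V) : ddist E x x = 0 := by
  have h : ddist E x x ≤ ((0:ℕ):ℝ≥0∞) :=
    ddist_le_of_chain (s := fun _ => x) (L := 0) (fun i hi => absurd hi (by omega)) rfl rfl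
  simpa using h

lemma ddist_le_one {x y : V} (h : E x y) : ddist E x y ≤ ((1:ℕ):ℝ≥0∞) := by
  refine ddist_le_of_chain (s := fun i => if i = 0 then x else y) (L := 1) ?_ (by simp) (by simp)
  intro i hi
  have : i = 0 := by omega
  simp [this, h]

lemma chain_concat {s1 : ℕ → V} {L1 : ℕ} {s2 : ℕ → V} {L2 : ℕ}
    (h1 : MyChain E s1 L1) (h2 : MyChain E s2 L2) (hj : s1 L1 = s2 0) :
    ∃ s : ℕ → V, MyChain E s (L1+L2) ∧ (∀ i, i ≤ L1 → s i = s1 i) ∧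
      (∀ i, L1 ≤ i → s i = s2 (i - L1)) := by
  classical
  refine ⟨fun i => if i ≤ L1 then s1 i else s2 (i - L1), ?_, ?_, ?_⟩
  · intro i hi
    dsimp only
    by_cases hle : i + 1 ≤ L1
    · simp only [if_pos (by omega : i ≤ L1), if_pos hle]
      exact h1 i (by omega)
    · by_cases hi1 : i ≤ L1
      · have hiL : i = L1 := by omega
        subst hiL
        rw [if_pos le_rfl, if_neg hle, hj]
        have e : i + 1 - i = 1 := by omega
        rw [e]
        exact h2 0 (by omega)
      · simp only [if_neg hi1, if_neg hle]
        have e : i + 1 - L1 = (i - L1) + 1 := by omega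
        rw [e]
        exact h2 (i - L1) (by omega)
  · intro i hi; simp [hi]
  · intro i hi
    by_cases h' : i ≤ L1
    · have : i = L1 := by omega
      simp [this, hj]
    · simp [h']

lemma ddist_triangle (E : V → V → Prop) (x y z : V) :
    ddist E x z ≤ ddist E x y + ddist E y z := by
  rcases eq_or_ne (ddist E x y) ⊤ with h | h
  · simp [h]
  rcases eq_or_ne (ddist E y z) ⊤ with h2 | h2
  · simp [h2]
  obtain ⟨L1, s1, hc1, h10, h1L, hd1⟩ := exists_geochain h
  obtain ⟨L2, s2, hc2, h20, h2L, hd2⟩ := exists_geochain h2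
  obtain ⟨s, hc, ha, hb⟩ := chain_concat hc1 hc2 (h1L.trans h20.symm)
  have h0 : s 0 = x := by rw [ha 0 (by omega), h10]
  have hLL : s (L1+L2) = z := by
    rw [hb (L1+L2) (by omega)]
    have : L1 + L2 - L1 = L2 := by omega
    rw [this, h2L]
  calc ddist E x z ≤ ((L1+L2:ℕ):ℝ≥0∞) := ddist_le_of_chain hc h0 hLL
    _ = ddist E x y + ddist E y z := by rw [hd1, hd2]; push_cast; ring

end ChainLayer
section GeoLayer

variable {V : Type*} {E : V → V → Prop}

lemma ddist_le_seg {s : ℕ → V} {L : ℕ} (hc : MyChain E s L) (i j : ℕ)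
    (hij : i ≤ j) (hjL : j ≤ L) : ddist E (s i) (s j) ≤ ((j - i : ℕ) : ℝ≥0∞) := by
  refine ddist_le_of_chain (mychain_shift hc i j hjL) (by simp) ?_
  show s (i + (j - i)) = s j
  congr 1; omega

/-- Subpaths of geodesic chains are geodesic. -/
lemma geo_subdist {s : ℕ → V} {L : ℕ} (hc : MyChain E s L)
    (hd : ddist E (s 0) (s L) = (L:ℝ≥0∞)) :
    ∀ i j, i ≤ j → j ≤ L → ddist E (s i) (s j) = ((j - i : ℕ) : ℝ≥0∞) := by
  intro i j hij hjL
  have hle : ddist E (s i) (s j) ≤ ((j - i : ℕ) : ℝ≥0∞) := ddist_le_seg hc i j hij hjL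
  obtain ⟨k, s', hc', h0', hL', hd'⟩ := exists_geochain (ddist_ne_top_of_le_nat hle)
  have hk : k ≤ j - i := by
    rw [hd'] at hle; exact_mod_cast hle
  obtain ⟨t1, ht1c, ht1a, ht1b⟩ := chain_concat (mychain_mono hc (le_trans hij hjL)) hc'
    (by rw [h0'])
  have ht1last : t1 (i + k) = s j := by
    rw [ht1b (i+k) (by omega)]
    have e : i + k - i = k := by omega
    rw [e, hL']
  obtain ⟨t2, ht2c, ht2a, ht2b⟩ := chain_concat ht1c (mychain_shift hc j L le_rfl)
    (by rw [ht1last]; show s j = s (j + 0); simp)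
  have h20 : t2 0 = s 0 := by rw [ht2a 0 (by omega), ht1a 0 (by omega)]
  have h2L : t2 (i + k + (L - j)) = s L := by
    rw [ht2b _ (by omega)]
    show s (j + (i + k + (L - j) - (i + k))) = s L
    congr 1; omega
  have hfin : ddist E (s 0) (s L) ≤ ((i + k + (L - j) : ℕ) : ℝ≥0∞) :=
    ddist_le_of_chain ht2c h20 h2L
  rw [hd] at hfin
  have hL' : L ≤ i + k + (L - j) := by exact_mod_cast hfin
  have : k = j - i := by omega
  rw [hd', this]

lemma ddist_ne_top_add {x y z : V} (h1 : ddist E x y ≠ ⊤) (h2 : ddist E y z ≠ ⊤) :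
    ddist E x z ≠ ⊤ := by
  intro h
  have := ddist_triangle E x y z
  rw [h] at this
  exact (ENNReal.add_ne_top.2 ⟨h1, h2⟩) (top_le_iff.1 this)

/-- Out-balls are finite when out-degrees are finite. -/
lemma ball_finite (hout : ∀ x : V, {y : V | E x y}.Finite) (x : V) :
    ∀ k : ℕ, {y : V | ddist E x y ≤ (k:ℝ≥0∞)}.Finite := by
  intro k
  induction k with
  | zero =>
    refine Set.Finite.subset (Set.finite_singleton x) ?_
    intro y hy
    simp only [Set.mem_setOf_eq, Nat.cast_zero, nonpos_iff_eq_zero] at hy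
    obtain ⟨L, s, hc, h0, hL, hd⟩ := exists_geochain (by rw [hy]; exact ENNReal.zero_ne_top)
    rw [hy] at hd
    have : L = 0 := by exact_mod_cast hd.symm
    subst this
    simp [← h0, hL]
  | succ k ih =>
    refine Set.Finite.subset (ih.union (ih.biUnion (fun v _ => hout v))) ?_
    intro y hy
    simp only [Set.mem_setOf_eq] at hy
    obtain ⟨L, s, hc, h0, hL, hd⟩ := exists_geochain (ddist_ne_top_of_le_nat hy)
    rw [hd] at hy
    have hLk : L ≤ k + 1 := by exact_mod_cast hy
    by_cases hLk' : L ≤ k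
    · left
      show ddist E x y ≤ (k:ℝ≥0∞)
      rw [hd]; exact_mod_cast hLk'
    · right
      have hL1 : L = k + 1 := by omega
      refine Set.mem_biUnion (x := s k) ?_ ?_
      · show ddist E x (s k) ≤ (k:ℝ≥0∞)
        have := ddist_le_seg hc 0 k (by omega) (by omega)
        rw [h0] at this
        simpa using this
      · show E (s k) y
        rw [← hL, hL1]
        exact hc k (by omega)

lemma ne_top_along_chain {s : ℕ → V} {L : ℕ} {x : V} (hc : MyChain E s L)
    (h0 : ddist E x (s 0) ≠ ⊤) : ∀ i, i ≤ L → ddist E x (s i) ≠ ⊤ := by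
  intro i hi
  refine ddist_ne_top_add h0 (ddist_ne_top_of_le_nat (k := i) ?_)
  simpa using ddist_le_seg hc 0 i (by omega) hi

end GeoLayer
section Koenig

variable {V : Type*} {E : V → V → Prop}

/-- Indices `n` such that some geodesic chain from `r 0` to `r n` of length `≥ m`
agrees with the prefix function `p` up to index `m`. -/
def ExtSet (E : V → V → Prop) (r : ℕ → V) (p : ℕ → V) (m : ℕ) : Set ℕ :=
  {n | ∃ (L : ℕ) (s : ℕ → V), MyChain E s L ∧ s 0 = r 0 ∧ s L = r n ∧
        ddist E (r 0) (r n) = (L:ℝ≥0∞) ∧ m ≤ L ∧ ∀ i, i ≤ m → s i = p i}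

lemma ray_chain {r : ℕ → V} (hr : IsRayD E r) (L : ℕ) : MyChain E r L :=
  fun i _ => hr.2 i

lemma ray_ddist_le {r : ℕ → V} (hr : IsRayD E r) {a b : ℕ} (hab : a ≤ b) :
    ddist E (r a) (r b) ≤ ((b - a : ℕ) : ℝ≥0∞) :=
  ddist_le_seg (ray_chain hr b) a b hab le_rfl

lemma ray_ddist_ne_top {r : ℕ → V} (hr : IsRayD E r) {a b : ℕ} (hab : a ≤ b) :
    ddist E (r a) (r b) ≠ ⊤ :=
  ddist_ne_top_of_le_nat (ray_ddist_le hr hab)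

lemma ext_base {r : ℕ → V} (hr : IsRayD E r) :
    (ExtSet E r (fun _ => r 0) 0).Infinite := by
  have : ExtSet E r (fun _ => r 0) 0 = Set.univ := by
    refine Set.eq_univ_of_forall fun n => ?_
    obtain ⟨L, s, hc, h0, hL, hd⟩ := exists_geochain (ray_ddist_ne_top hr (Nat.zero_le n))
    exact ⟨L, s, hc, h0, hL, hd, Nat.zero_le L, fun i hi => by
      have : i = 0 := by omega
      rw [this, h0]⟩
  rw [this]
  exact Set.infinite_univ

lemma ext_step {r : ℕ → V} (hr : IsRayD E r) (hout : ∀ x : V, {y : V | E x y}.Finite)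
    (p : ℕ → V) (m : ℕ) (h : (ExtSet E r p m).Infinite) :
    ∃ w : V, (ExtSet E r (fun i => if i = m+1 then w else p i) (m+1)).Infinite := by
  classical
  have hball : {n : ℕ | ddist E (r 0) (r n) ≤ (m:ℝ≥0∞)}.Finite := by
    have : {n : ℕ | ddist E (r 0) (r n) ≤ (m:ℝ≥0∞)} =
        r ⁻¹' {y | ddist E (r 0) y ≤ (m:ℝ≥0∞)} := rfl
    rw [this]
    exact Set.Finite.preimage (hr.1.injOn) (ball_finite hout (r 0) m)
  have hE1inf : (ExtSet E r p m \ {n : ℕ | ddist E (r 0) (r n) ≤ (m:ℝ≥0∞)}).Infinite :=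
    h.diff hball
  set E1 := ExtSet E r p m \ {n : ℕ | ddist E (r 0) (r n) ≤ (m:ℝ≥0∞)} with hE1def
  have key : ∀ n, n ∈ E1 → ∃ (L : ℕ) (s : ℕ → V), MyChain E s L ∧ s 0 = r 0 ∧ s L = r n ∧
      ddist E (r 0) (r n) = (L:ℝ≥0∞) ∧ m + 1 ≤ L ∧ ∀ i, i ≤ m → s i = p i := by
    rintro n ⟨⟨L, s, hc, h0, hL, hd, hm, hag⟩, hn2⟩
    refine ⟨L, s, hc, h0, hL, hd, ?_, hag⟩
    simp only [Set.mem_setOf_eq, hd] at hn2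
    have : ¬ (L ≤ m) := fun hcon => hn2 (by exact_mod_cast hcon)
    omega
  have _instV : Nonempty V := ⟨r 0⟩
  choose! Lf sf hc0 hs0 hsL hsd hsm hsag using key
  have hmem : ∀ n, n ∈ E1 → sf n (m+1) ∈ {y | E (p m) y} := by
    intro n hn
    have := hc0 n hn m (by have := hsm n hn; omega)
    rwa [hsag n hn m le_rfl] at this
  have hpig : ∃ w ∈ {y | E (p m) y}, {n | n ∈ E1 ∧ sf n (m+1) = w}.Infinite := by
    by_contra hcon
    push_neg at hcon
    have hsub : E1 ⊆ ⋃ w ∈ {y | E (p m) y}, {n | n ∈ E1 ∧ sf n (m+1) = w} := by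
      intro n hn
      exact Set.mem_biUnion (hmem n hn) ⟨hn, rfl⟩
    exact hE1inf (Set.Finite.subset
      (Set.Finite.biUnion (hout (p m)) fun w hw => hcon w hw) hsub)
  obtain ⟨w, -, hwinf⟩ := hpig
  refine ⟨w, hwinf.mono ?_⟩
  rintro n ⟨hn, hφ⟩
  refine ⟨Lf n, sf n, hc0 n hn, hs0 n hn, hsL n hn, hsd n hn, by have := hsm n hn; omega, ?_⟩
  intro i hi
  dsimp only
  by_cases him : i = m+1
  · rw [him, if_pos rfl, ← hφ]
  · rw [if_neg him]
    exact hsag n hn i (by omega)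

variable (E) in
noncomputable def extendT (r : ℕ → V) (hr : IsRayD E r)
    (hout : ∀ x : V, {y : V | E x y}.Finite) (m : ℕ)
    (x : {p : ℕ → V // (ExtSet E r p m).Infinite}) :
    {p : ℕ → V // (ExtSet E r p (m+1)).Infinite} :=
  ⟨_, (ext_step hr hout x.1 m x.2).choose_spec⟩

lemma extendT_ne {r : ℕ → V} (hr : IsRayD E r)
    (hout : ∀ x : V, {y : V | E x y}.Finite) (m : ℕ)
    (x : {p : ℕ → V // (ExtSet E r p m).Infinite}) {i : ℕ} (hi : i ≠ m+1) :
    (extendT E r hr hout m x).1 i = x.1 i := by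
  show (if i = m+1 then _ else x.1 i) = x.1 i
  rw [if_neg hi]

variable (E) in
noncomputable def tower (r : ℕ → V) (hr : IsRayD E r)
    (hout : ∀ x : V, {y : V | E x y}.Finite) :
    (m : ℕ) → {p : ℕ → V // (ExtSet E r p m).Infinite}
  | 0 => ⟨fun _ => r 0, ext_base hr⟩
  | m+1 => extendT E r hr hout m (tower r hr hout m)

lemma tower_agree {r : ℕ → V} (hr : IsRayD E r)
    (hout : ∀ x : V, {y : V | E x y}.Finite) :
    ∀ m i, i ≤ m → (tower E r hr hout m).1 i = (tower E r hr hout i).1 i := by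
  intro m
  induction m with
  | zero =>
    intro i hi
    have h0 : i = 0 := by omega
    subst h0
    rfl
  | succ m ih =>
    intro i hi
    by_cases him : i = m+1
    · rw [him]
    · have h1 : (tower E r hr hout (m+1)).1 i = (tower E r hr hout m).1 i := by
        show (extendT E r hr hout m (tower E r hr hout m)).1 i = _
        exact extendT_ne hr hout m _ him
      rw [h1]
      exact ih i (by omega)

/-- The König limit: a geodesic ray `q` from `r 0` such that for every `m`,
infinitely many `n` admit geodesics to `r n` agreeing with `q` up to `m`. -/
lemma koenig {r : ℕ → V} (hr : IsRayD E r)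
    (hout : ∀ x : V, {y : V | E x y}.Finite) :
    ∃ q : ℕ → V, IsGeoRayD E q ∧ q 0 = r 0 ∧
      ∀ m : ℕ, {n : ℕ | ∃ (L : ℕ) (s : ℕ → V), MyChain E s L ∧ s 0 = r 0 ∧ s L = r n ∧
        ddist E (r 0) (r n) = (L:ℝ≥0∞) ∧ m ≤ L ∧ ∀ i, i ≤ m → s i = q i}.Infinite := by
  set q : ℕ → V := fun m => (tower E r hr hout m).1 m with hqdef
  have hKinf : ∀ m : ℕ, {n : ℕ | ∃ (L : ℕ) (s : ℕ → V), MyChain E s L ∧ s 0 = r 0 ∧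
      s L = r n ∧ ddist E (r 0) (r n) = (L:ℝ≥0∞) ∧ m ≤ L ∧ ∀ i, i ≤ m → s i = q i}.Infinite := by
    intro m
    refine Set.Infinite.mono ?_ ((tower E r hr hout m).2)
    rintro n ⟨L, s, hc, h0, hL, hd, hm, hag⟩
    exact ⟨L, s, hc, h0, hL, hd, hm, fun i hi => by
      rw [hag i hi, tower_agree hr hout m i hi]⟩
  have hq0 : q 0 = r 0 := rfl
  have hdist : ∀ i j, i ≤ j → ddist E (q i) (q j) = ((j - i : ℕ) : ℝ≥0∞) := by
    intro i j hij
    obtain ⟨n, L, s, hc, h0, hL, hd, hm, hag⟩ := (hKinf j).nonempty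
    have hgeo : ddist E (s 0) (s L) = (L:ℝ≥0∞) := by rw [h0, hL]; exact hd
    have := geo_subdist hc hgeo i j hij hm
    rwa [hag i (by omega), hag j le_rfl] at this
  have hedge : ∀ i, E (q i) (q (i+1)) := by
    intro i
    obtain ⟨n, L, s, hc, h0, hL, hd, hm, hag⟩ := (hKinf (i+1)).nonempty
    have := hc i (by omega)
    rwa [hag i (by omega), hag (i+1) le_rfl] at this
  have hinj : Function.Injective q := by
    intro a b hab
    rcases lt_trichotomy a b with h | h | h
    · exfalso
      have := hdist a b (le_of_lt h)
      rw [hab, ddist_self] at this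
      have : b - a = 0 := by exact_mod_cast this.symm
      omega
    · exact h
    · exfalso
      have := hdist b a (le_of_lt h)
      rw [hab, ddist_self] at this
      have : a - b = 0 := by exact_mod_cast this.symm
      omega
  exact ⟨q, ⟨⟨hinj, hedge⟩, hdist⟩, hq0, hKinf⟩

end Koenig
section Helpers

variable {V : Type*} {E : V → V → Prop}

lemma finW_zero (s : ℕ → V) (a len : ℕ) :
    (fun i : Fin (len+1) => s (a + (i:ℕ))) 0 = s a := by simp

lemma finW_last (s : ℕ → V) (a len : ℕ) :
    (fun i : Fin (len+1) => s (a + (i:ℕ))) (Fin.last len) = s (a + len) := by simp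

lemma isGeoWalk_sub {s : ℕ → V} {N : ℕ} (hc : MyChain E s N)
    (hd : ddist E (s 0) (s N) = (N:ℝ≥0∞)) (a b : ℕ) (hab : a ≤ b) (hbN : b ≤ N) :
    IsGeoWalk E (b - a) (fun i : Fin (b - a + 1) => s (a + (i:ℕ))) := by
  constructor
  · exact isWalk_of_chain (mychain_shift hc a b hbN)
  · rw [finW_zero, finW_last]
    have e : a + (b - a) = b := by omega
    rw [e]
    exact (geo_subdist hc hd a b hab hbN).symm

lemma mem_range_finW {s : ℕ → V} {len : ℕ} {a : ℕ} {v : V}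
    (h : v ∈ Set.range (fun i : Fin (len+1) => s (a + (i:ℕ)))) :
    ∃ u, u ≤ len ∧ v = s (a + u) := by
  obtain ⟨i, hi⟩ := h
  exact ⟨i, by omega, hi.symm⟩

lemma finW_mem {s : ℕ → V} {len : ℕ} {a : ℕ} (u : ℕ) (hu : u ≤ len) :
    s (a + u) ∈ Set.range (fun i : Fin (len+1) => s (a + (i:ℕ))) :=
  ⟨⟨u, by omega⟩, rfl⟩

/-- Build infinitely many disjoint paths from walks escaping every ball around `x0`. -/
lemma build_family (x0 : V) (A B : Set V)
    (H : ∀ ρ : ℕ, ∃ (s : ℕ → V) (L : ℕ), MyChain E s L ∧ s 0 ∈ A ∧ s L ∈ B ∧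
      ∀ i, i ≤ L → ¬ ddist E x0 (s i) ≤ (ρ:ℝ≥0∞) ∧ ddist E x0 (s i) ≠ ⊤) :
    InfDisjPaths E A B := by
  classical
  choose s L hc hA hB hesc using H
  set wB : ℕ → ℕ := fun ρ => (Finset.range (L ρ + 1)).sup
      fun i => ⌈(ddist E x0 (s ρ i)).toNNReal⌉₊ with hwB
  set ρseq : ℕ → ℕ := fun k => Nat.rec 0 (fun _ acc => max acc (wB acc) + 1) k with hρ
  have hρsucc : ∀ k, ρseq (k+1) = max (ρseq k) (wB (ρseq k)) + 1 := fun k => rfl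
  have hstep : ∀ k, ρseq k < ρseq (k+1) := by
    intro k
    rw [hρsucc]
    have := le_max_left (ρseq k) (wB (ρseq k))
    omega
  have hmono : StrictMono ρseq := strictMono_nat_of_lt_succ hstep
  have hwlt : ∀ k l, k < l → wB (ρseq k) < ρseq l := by
    intro k l hkl
    have h1 : wB (ρseq k) < ρseq (k+1) := by
      rw [hρsucc]
      have := le_max_right (ρseq k) (wB (ρseq k))
      omega
    exact lt_of_lt_of_le h1 (hmono.monotone hkl)
  have aux : ∀ k l, k < l →
      Disjoint (Set.range (fun i : Fin (L (ρseq k) + 1) => s (ρseq k) (i:ℕ)))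
        (Set.range (fun i : Fin (L (ρseq l) + 1) => s (ρseq l) (i:ℕ))) := by
    intro k l hkl
    rw [Set.disjoint_left]
    rintro v ⟨i, hik⟩ ⟨i', hil⟩
    dsimp only at hik hil
    have hne := (hesc (ρseq k) (i:ℕ) (by omega)).2
    rw [hik] at hne
    have htop : ⌈(ddist E x0 v).toNNReal⌉₊ ≤ wB (ρseq k) := by
      rw [hwB, ← hik]
      exact Finset.le_sup (f := fun j => ⌈(ddist E x0 (s (ρseq k) j)).toNNReal⌉₊)
        (Finset.mem_range.2 i.2)
    have hle : ddist E x0 v ≤ ((ρseq l : ℕ) : ℝ≥0∞) := by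
      have hcoe : ddist E x0 v = ((ddist E x0 v).toNNReal : ℝ≥0∞) :=
        (ENNReal.coe_toNNReal hne).symm
      rw [hcoe]
      calc ((ddist E x0 v).toNNReal : ℝ≥0∞)
          ≤ ((⌈(ddist E x0 v).toNNReal⌉₊ : ℝ≥0) : ℝ≥0∞) :=
            ENNReal.coe_le_coe.2 (Nat.le_ceil _)
        _ ≤ ((ρseq l : ℕ) : ℝ≥0∞) := by
            rw [ENNReal.coe_natCast]
            exact_mod_cast le_of_lt (lt_of_le_of_lt htop (hwlt k l hkl))
    have hbad := (hesc (ρseq l) (i':ℕ) (by omega)).1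
    rw [hil] at hbad
    exact hbad hle
  refine ⟨fun k => Set.range (fun i : Fin (L (ρseq k) + 1) => s (ρseq k) (i:ℕ)), ?_, ?_⟩
  · intro k
    refine ⟨L (ρseq k), _, isWalk_of_chain (hc (ρseq k)), ?_, ?_, rfl⟩
    · simpa using hA (ρseq k)
    · simpa using hB (ρseq k)
  · intro k l hkl
    rcases lt_or_gt_of_ne hkl with h | h
    · exact aux k l h
    · exact (aux l k h).symm

end Helpers
section Escape

variable {V : Type*} {E : V → V → Prop}

lemma mem_range_finW' {s : ℕ → V} {len : ℕ} {v : V}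
    (h : v ∈ Set.range (fun i : Fin (len+1) => s ((i:ℕ)))) :
    ∃ u, u ≤ len ∧ v = s u := by
  obtain ⟨i, hi⟩ := h
  exact ⟨i, by omega, hi.symm⟩

lemma isGeoWalk_full {s : ℕ → V} {N : ℕ} (hc : MyChain E s N)
    (hd : ddist E (s 0) (s N) = (N:ℝ≥0∞)) :
    IsGeoWalk E N (fun i : Fin (N+1) => s ((i:ℕ))) := by
  refine ⟨isWalk_of_chain hc, ?_⟩
  simpa using hd.symm

lemma escape_qr {r q : ℕ → V}
    (hK : ∀ m : ℕ, {n : ℕ | ∃ (L : ℕ) (s : ℕ → V), MyChain E s L ∧ s 0 = r 0 ∧ s L = r n ∧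
        ddist E (r 0) (r n) = (L:ℝ≥0∞) ∧ m ≤ L ∧ ∀ i, i ≤ m → s i = q i}.Infinite)
    (ρ : ℕ) :
    ∃ (s : ℕ → V) (L : ℕ), MyChain E s L ∧ s 0 ∈ Set.range q ∧ s L ∈ Set.range r ∧
      ∀ i, i ≤ L → ¬ ddist E (r 0) (s i) ≤ (ρ:ℝ≥0∞) ∧ ddist E (r 0) (s i) ≠ ⊤ := by
  obtain ⟨n, L, s, hc, h0, hL, hd, hm, hag⟩ := (hK (ρ+1)).nonempty
  have hgeo : ddist E (s 0) (s L) = (L:ℝ≥0∞) := by rw [h0, hL]; exact hd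
  refine ⟨fun i => s (ρ+1+i), L - (ρ+1), mychain_shift hc (ρ+1) L le_rfl, ?_, ?_, ?_⟩
  · show s (ρ+1+0) ∈ _
    rw [hag (ρ+1) le_rfl]
    exact ⟨ρ+1, rfl⟩
  · show s (ρ+1+(L-(ρ+1))) ∈ _
    rw [show ρ+1+(L-(ρ+1)) = L by omega, hL]
    exact ⟨n, rfl⟩
  · intro i hi
    show ¬ ddist E (r 0) (s (ρ+1+i)) ≤ (ρ:ℝ≥0∞) ∧ ddist E (r 0) (s (ρ+1+i)) ≠ ⊤
    have hht : ddist E (r 0) (s (ρ+1+i)) = ((ρ+1+i:ℕ):ℝ≥0∞) := by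
      have := geo_subdist hc hgeo 0 (ρ+1+i) (by omega) (by omega)
      rw [h0] at this
      simpa using this
    constructor
    · intro hcon
      rw [hht] at hcon
      have : (ρ+1+i : ℕ) ≤ ρ := by exact_mod_cast hcon
      omega
    · rw [hht]
      exact ENNReal.natCast_ne_top _

end Escape
section MainEscape

variable {V : Type*} {E : V → V → Prop}

lemma escape_rq (δ : ℝ≥0) (g : ℝ≥0 → ℝ≥0) (hhyp : DHyper E ↑δ) (hB2 : DB2 E g)
    {r q : ℕ → V} (hr : IsRayD E r)
    (hK : ∀ m : ℕ, {n : ℕ | ∃ (L : ℕ) (s : ℕ → V), MyChain E s L ∧ s 0 = r 0 ∧ s L = r n ∧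
        ddist E (r 0) (r n) = (L:ℝ≥0∞) ∧ m ≤ L ∧ ∀ i, i ≤ m → s i = q i}.Infinite)
    (ρ : ℕ) :
    ∃ (s : ℕ → V) (L : ℕ), MyChain E s L ∧ s 0 ∈ Set.range r ∧ s L ∈ Set.range q ∧
      ∀ i, i ≤ L → ¬ ddist E (r 0) (s i) ≤ (ρ:ℝ≥0∞) ∧ ddist E (r 0) (s i) ≠ ⊤ := by
  classical
  set δ' : ℕ := ⌈δ⌉₊ with hδ'def
  have hδle : (δ:ℝ≥0∞) ≤ ((δ':ℕ):ℝ≥0∞) := by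
    rw [← ENNReal.coe_natCast]
    exact ENNReal.coe_le_coe.2 (Nat.le_ceil δ)
  set ρ₂ : ℕ := ρ + 2*δ' + 1 with hρ₂def
  set Ghat : ℕ := (Finset.range (ρ₂+1)).sup (fun k => ⌈g (max (k:ℝ≥0) δ)⌉₊) with hGhatdef
  set τ : ℕ := max Ghat ρ₂ with hτdef
  set Ghat2 : ℕ := (Finset.range (τ+1)).sup (fun k => ⌈g (max (k:ℝ≥0) δ)⌉₊) with hGhat2def
  set mstar : ℕ := max Ghat2 τ + δ' + 1 with hmstardef
  -- choose j
  obtain ⟨j, Lj, gj, hgjc, hgj0, hgjL, hdj, hLjm, hagj⟩ := (hK mstar).nonempty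
  set m' : ℕ := Lj + 2*δ' + 2 with hm'def
  -- choose n > j
  obtain ⟨n, hnmem⟩ := ((hK m').diff (Set.finite_Iic j)).nonempty
  obtain ⟨⟨Ln, gn, hgnc, hgn0, hgnL, hdn, hLnm, hagn⟩, hjn'⟩ := hnmem
  have hjn : j < n := by simpa using hjn'
  -- geodesic chain h from r j to r n
  obtain ⟨nh, h, hhc, hh0, hhL, hdh⟩ := exists_geochain (ray_ddist_ne_top hr (le_of_lt hjn))
  -- geodesic facts
  have hgjgeo : ddist E (gj 0) (gj Lj) = (Lj:ℝ≥0∞) := by rw [hgj0, hgjL]; exact hdj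
  have hgngeo : ddist E (gn 0) (gn Ln) = (Ln:ℝ≥0∞) := by rw [hgn0, hgnL]; exact hdn
  have hhgeo : ddist E (h 0) (h nh) = (nh:ℝ≥0∞) := by rw [hh0, hhL]; exact hdh
  have hgjht : ∀ i, i ≤ Lj → ddist E (r 0) (gj i) = (i:ℝ≥0∞) := by
    intro i hi
    have := geo_subdist hgjc hgjgeo 0 i (by omega) hi
    rw [hgj0] at this
    simpa using this
  have hgnht : ∀ i, i ≤ Ln → ddist E (r 0) (gn i) = (i:ℝ≥0∞) := by
    intro i hi
    have := geo_subdist hgnc hgngeo 0 i (by omega) hi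
    rw [hgn0] at this
    simpa using this
  have hhfin : ∀ u, u ≤ nh → ddist E (r 0) (h u) ≠ ⊤ := by
    refine ne_top_along_chain hhc ?_
    rw [hh0]
    exact ray_ddist_ne_top hr (by omega)
  have hmLj : mstar ≤ Lj := hLjm
  have hmLn : m' ≤ Ln := hLnm
  -- the two thin triangles
  have T1 := hhyp (r 0) nh Lj Ln
    (fun i : Fin (nh+1) => h ((i:ℕ))) (fun i : Fin (Lj+1) => gj ((i:ℕ)))
    (fun i : Fin (Ln+1) => gn ((i:ℕ)))
    (isGeoWalk_full hhc hhgeo) (isGeoWalk_full hgjc hgjgeo) (isGeoWalk_full hgnc hgngeo)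
    (Or.inr ⟨by simpa using hgj0, by simp only [Fin.val_last, Fin.val_zero]; rw [hgjL, hh0]⟩)
    (Or.inr ⟨by simpa using hgn0, by simp only [Fin.val_last]; rw [hgnL, hhL]⟩)
  have T2 := hhyp (q mstar) nh (Lj - mstar) (Ln - mstar)
    (fun i : Fin (nh+1) => h ((i:ℕ)))
    (fun i : Fin (Lj - mstar + 1) => gj (mstar + (i:ℕ)))
    (fun i : Fin (Ln - mstar + 1) => gn (mstar + (i:ℕ)))
    (isGeoWalk_full hhc hhgeo)
    (isGeoWalk_sub hgjc hgjgeo mstar Lj hmLj le_rfl)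
    (isGeoWalk_sub hgnc hgngeo mstar Ln (by omega) le_rfl)
    (Or.inr ⟨by rw [finW_zero]; exact hagj mstar le_rfl,
      by rw [finW_last]; simp only [Fin.val_zero]
         rw [show mstar + (Lj - mstar) = Lj by omega, hgjL, hh0]⟩)
    (Or.inr ⟨by rw [finW_zero]; exact hagn mstar (by omega),
      by rw [finW_last]; simp only [Fin.val_last]
         rw [show mstar + (Ln - mstar) = Ln by omega, hgnL, hhL]⟩)
  -- Claim 2: every vertex of h is high
  have claim2 : ∀ u, u ≤ nh → ¬ ddist E (r 0) (h u) ≤ ((τ:ℕ):ℝ≥0∞) := by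
    intro u hu hle
    obtain ⟨βN, hβ⟩ := exists_nat_of_ne_top (hhfin u hu)
    have hβτ : βN ≤ τ := by
      rw [hβ] at hle
      exact_mod_cast hle
    have hmem : h u ∈ Set.range (fun i : Fin (nh+1) => h ((i:ℕ))) := ⟨⟨u, by omega⟩, rfl⟩
    rcases T2 hmem with hO | hI
    · obtain ⟨a, ha, had⟩ := hO
      obtain ⟨i0, hi0, rfl⟩ := mem_range_finW ha
      have hi'd : ddist E (r 0) (gj (mstar + i0)) = ((mstar + i0:ℕ):ℝ≥0∞) :=
        hgjht _ (by omega)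
      have happ := hB2 (h u) (r 0) (gj (mstar + i0)) (max (βN:ℝ≥0) δ)
        (by rw [hβ, ← ENNReal.coe_natCast]; exact ENNReal.coe_le_coe.2 (le_max_left _ _))
        (le_trans had (ENNReal.coe_le_coe.2 (le_max_right _ _)))
        (by rw [hi'd]; exact ENNReal.natCast_ne_top _)
      rw [hi'd] at happ
      have h1 : (mstar + i0 : ℕ) ≤ ⌈g (max (βN:ℝ≥0) δ)⌉₊ := by
        have h2 : ((mstar + i0:ℕ):ℝ≥0∞) ≤ ((⌈g (max (βN:ℝ≥0) δ)⌉₊:ℕ):ℝ≥0∞) := by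
          refine le_trans happ ?_
          rw [← ENNReal.coe_natCast]
          exact ENNReal.coe_le_coe.2 (Nat.le_ceil _)
        exact_mod_cast h2
      have h3 : ⌈g (max (βN:ℝ≥0) δ)⌉₊ ≤ Ghat2 := by
        rw [hGhat2def]
        exact Finset.le_sup (f := fun k : ℕ => ⌈g (max (k:ℝ≥0) δ)⌉₊)
          (Finset.mem_range.2 (by omega))
      omega
    · obtain ⟨b, hb, hbd⟩ := hI
      obtain ⟨i1, hi1, rfl⟩ := mem_range_finW hb
      have hσd : ddist E (r 0) (gn (mstar + i1)) = ((mstar + i1:ℕ):ℝ≥0∞) :=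
        hgnht _ (by omega)
      have h2 : ((mstar + i1:ℕ):ℝ≥0∞) ≤ ((βN + δ':ℕ):ℝ≥0∞) := by
        rw [← hσd]
        refine le_trans (ddist_triangle E (r 0) (h u) (gn (mstar + i1))) ?_
        rw [hβ]
        push_cast
        exact add_le_add le_rfl (le_trans hbd hδle)
      have h3 : mstar + i1 ≤ βN + δ' := by exact_mod_cast h2
      omega
  -- first inball time t
  have hPnh : h nh ∈ inBallSetD E (Set.range (fun i : Fin (Ln+1) => gn ((i:ℕ)))) ↑δ := by
    refine ⟨gn Ln, ⟨⟨Ln, by omega⟩, rfl⟩, ?_⟩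
    rw [hhL, hgnL, ddist_self]
    positivity
  have hex : ∃ u, h u ∈ inBallSetD E (Set.range (fun i : Fin (Ln+1) => gn ((i:ℕ)))) ↑δ :=
    ⟨nh, hPnh⟩
  set t := Nat.find hex with htdef
  have htspec := Nat.find_spec hex
  have htle : t ≤ nh := Nat.find_le hPnh
  obtain ⟨ηN, hη⟩ := exists_nat_of_ne_top (hhfin t htle)
  -- height bound at t
  have hηb : ηN ≤ Lj + δ' + 1 := by
    rcases Nat.eq_zero_or_pos t with h0 | hpos
    · have : ddist E (r 0) (h t) = (Lj:ℝ≥0∞) := by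
        rw [h0, hh0]
        exact hdj
      rw [hη] at this
      have : ηN = Lj := by exact_mod_cast this
      omega
    · have hnot : h (t-1) ∉ inBallSetD E (Set.range (fun i : Fin (Ln+1) => gn ((i:ℕ)))) ↑δ :=
        Nat.find_min hex (by omega)
      have hmem1 : h (t-1) ∈ Set.range (fun i : Fin (nh+1) => h ((i:ℕ))) :=
        ⟨⟨t-1, by omega⟩, rfl⟩
      have hO := (T1 hmem1).resolve_right hnot
      obtain ⟨a, ha, had⟩ := hO
      obtain ⟨i2, hi2, rfl⟩ := mem_range_finW' ha
      have e1 : ddist E (r 0) (h (t-1)) ≤ (Lj:ℝ≥0∞) + ↑δ := by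
        refine le_trans (ddist_triangle E (r 0) (gj i2) (h (t-1))) ?_
        refine add_le_add ?_ had
        rw [hgjht i2 hi2]
        exact Nat.cast_le.2 hi2
      have e2 : ddist E (h (t-1)) (h t) ≤ ((1:ℕ):ℝ≥0∞) := by
        have := ddist_le_one (hhc (t-1) (by omega))
        rwa [show t-1+1 = t by omega] at this
      have e3 : (ηN:ℝ≥0∞) ≤ (Lj:ℝ≥0∞) + ↑δ + ((1:ℕ):ℝ≥0∞) := by
        rw [← hη]
        exact le_trans (ddist_triangle E (r 0) (h (t-1)) (h t)) (add_le_add e1 e2)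
      have e4 : (ηN:ℝ≥0∞) ≤ ((Lj + δ' + 1:ℕ):ℝ≥0∞) := by
        refine le_trans e3 ?_
        push_cast
        exact add_le_add (add_le_add le_rfl hδle) le_rfl
      exact_mod_cast e4
  -- the landing point
  obtain ⟨b, hbmem, hbd⟩ := htspec
  obtain ⟨σ, hσLn, rfl⟩ := mem_range_finW' hbmem
  have hσht : ddist E (r 0) (gn σ) = (σ:ℝ≥0∞) := hgnht σ hσLn
  have hσub : σ ≤ ηN + δ' := by
    have h2 : (σ:ℝ≥0∞) ≤ ((ηN + δ':ℕ):ℝ≥0∞) := by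
      rw [← hσht]
      refine le_trans (ddist_triangle E (r 0) (h t) (gn σ)) ?_
      rw [hη]
      push_cast
      exact add_le_add le_rfl (le_trans hbd hδle)
    exact_mod_cast h2
  have hσm' : σ ≤ m' := by omega
  have hqσ : gn σ = q σ := hagn σ hσm'
  -- σ is large
  have hσlb : ρ + δ' + 1 ≤ σ := by
    by_contra hcon
    push_neg at hcon
    have happ := hB2 (gn σ) (r 0) (h t) (max (σ:ℝ≥0) δ)
      (by rw [hσht, ← ENNReal.coe_natCast]; exact ENNReal.coe_le_coe.2 (le_max_left _ _))
      (le_trans hbd (ENNReal.coe_le_coe.2 (le_max_right _ _)))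
      (hhfin t htle)
    have h1 : ηN ≤ ⌈g (max (σ:ℝ≥0) δ)⌉₊ := by
      have h2 : ((ηN:ℕ):ℝ≥0∞) ≤ ((⌈g (max (σ:ℝ≥0) δ)⌉₊:ℕ):ℝ≥0∞) := by
        rw [← hη]
        refine le_trans happ ?_
        rw [← ENNReal.coe_natCast]
        exact ENNReal.coe_le_coe.2 (Nat.le_ceil _)
      exact_mod_cast h2
    have h2 : ⌈g (max (σ:ℝ≥0) δ)⌉₊ ≤ Ghat := by
      rw [hGhatdef]
      exact Finset.le_sup (f := fun k : ℕ => ⌈g (max (k:ℝ≥0) δ)⌉₊)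
        (Finset.mem_range.2 (by omega))
    refine claim2 t htle ?_
    rw [hη]
    exact Nat.cast_le.2 (by omega)
  -- the tail chain
  obtain ⟨ℓ, w, hwc, hw0, hwL, hdw⟩ :=
    exists_geochain (ne_top_of_le_ne_top ENNReal.coe_ne_top hbd)
  have hℓδ : ℓ ≤ δ' := by
    have : (ℓ:ℝ≥0∞) ≤ ((δ':ℕ):ℝ≥0∞) := by
      rw [← hdw]
      exact le_trans hbd hδle
    exact_mod_cast this
  have htail : ∀ i, i ≤ ℓ → ¬ ddist E (r 0) (w i) ≤ (ρ:ℝ≥0∞) := by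
    intro i hi hcon
    have h1 : ddist E (w i) (w ℓ) ≤ ((ℓ - i:ℕ):ℝ≥0∞) := ddist_le_seg hwc i ℓ hi le_rfl
    have h2 : ddist E (r 0) (gn σ) ≤ (ρ:ℝ≥0∞) + ((ℓ - i:ℕ):ℝ≥0∞) := by
      rw [← hwL]
      exact le_trans (ddist_triangle E (r 0) (w i) (w ℓ)) (add_le_add hcon h1)
    rw [hσht] at h2
    have h3 : σ ≤ ρ + (ℓ - i) := by exact_mod_cast h2
    omega
  have htailfin : ∀ i, i ≤ ℓ → ddist E (r 0) (w i) ≠ ⊤ := by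
    refine ne_top_along_chain hwc ?_
    rw [hw0]
    exact hhfin t htle
  -- concatenate
  obtain ⟨sfin, hsc, hsa, hsb⟩ := chain_concat (mychain_mono hhc htle) hwc (by rw [hw0])
  refine ⟨sfin, t + ℓ, hsc, ?_, ?_, ?_⟩
  · rw [hsa 0 (by omega), hh0]
    exact ⟨j, rfl⟩
  · rw [hsb (t+ℓ) (by omega), show t+ℓ-t = ℓ by omega, hwL, hqσ]
    exact ⟨σ, rfl⟩
  · intro i hi
    rcases le_or_gt i t with hit | hit
    · rw [hsa i hit]
      constructor
      · intro hcon
        refine claim2 i (by omega) (le_trans hcon ?_)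
        exact Nat.cast_le.2 (by omega)
      · exact hhfin i (by omega)
    · rw [hsb i (by omega)]
      exact ⟨htail (i - t) (by omega), htailfin (i - t) (by omega)⟩

end MainEscape
/-- In a hyperbolic digraph satisfying (B1) and (B2) in which every vertex has
finite out-degree, for every ray `r` there is a geodesic ray `q` starting at the
starting vertex of `r` lying in the same f-end: there are infinitely many pairwise
disjoint directed `r`-`q` paths and infinitely many pairwise disjoint directed
`q`-`r` paths. -/
theorem stmt_17 {V : Type*} (E : V → V → Prop) (δ : ℝ≥0) (f g : ℝ≥0 → ℝ≥0)
    (hhyp : DHyper E δ) (hB1 : DB1 E f) (hB2 : DB2 E g)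
    (hout : ∀ x : V, {y : V | E x y}.Finite)
    (r : ℕ → V) (hr : IsRayD E r) :
    ∃ q : ℕ → V, IsGeoRayD E q ∧ q 0 = r 0 ∧
      InfDisjPaths E (Set.range r) (Set.range q) ∧
      InfDisjPaths E (Set.range q) (Set.range r) := by
  classical
  obtain ⟨q, hqgeo, hq0, hK⟩ := koenig hr hout
  refine ⟨q, hqgeo, hq0, ?_, ?_⟩
  · exact build_family (r 0) (Set.range r) (Set.range q) (escape_rq δ g hhyp hB2 hr hK)
  · exact build_family (r 0) (Set.range q) (Set.range r) (fun ρ => escape_qr hK ρ)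
end
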